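/- arXiv:1412.6147 — 5 statements merged into one kernel-verified Lean document; each statement's English description precedes it below -/
import Mathlib

section
/- Let G be a cubic (3-regular) graph with girth g. Then λ₂(G) ≤ 3 − 2√2·cos(π/⌊g/2⌋). -/
/-!
Fix an edge `uv` and let `k = ⌊g/2⌋`. Since `g ≥ 2k`, within distance `k - 1` of the edge the graph
is a tree: a vertex has at most one neighbour closer to a given root and none at the same distance.
Put `f = c (dist u ·)` on the vertices nearer to `u` than to `v`, up to depth `k - 1`, and `h`
symmetrically, where `c` solves `c (i-1) + (d-1) c (i+1) = 2√(d-1) cos(π/k) c i` with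
`c (-1) = -c 0` and `c k = -c (k-1)`. These boundary values give `A (f - h) ≥ 2√(d-1) cos(π/k) f`
on the support of `f`, and likewise for `h`; as the cross term `f ⬝ A h` is nonnegative, the
mean-zero vector `(∑ h) f - (∑ f) h` has Rayleigh quotient at most `d - 2√(d-1) cos(π/k)`.
For `g = 3` the vector `e_u - e_v`, with quotient `d + 1`, suffices.
-/

open scoped Classical

/-- The algebraic connectivity of a graph `G` on a finite vertex set:
`λ₂ = min` over nonzero `x` with `∑ x i = 0` of the Rayleigh quotient
`(∑_{(i,j)∈E} (x i - x j)²) / (∑ i, x i ²)`.  The double sum over ordered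
adjacent pairs counts every edge twice, whence the division by `2`. -/
noncomputable def algConn (V : Type*) [Fintype V] (G : SimpleGraph V) : ℝ :=
  sInf {r : ℝ | ∃ x : V → ℝ, x ≠ 0 ∧ (∑ i, x i) = 0 ∧
    r = (∑ i, ∑ j, if G.Adj i j then (x i - x j) ^ 2 else 0) /
        (2 * ∑ i, (x i) ^ 2)}

open Real Matrix

-- `a ^ (-i)` times the solution of `s (i-1) + s (i+1) = 2 cos θ s i` with `s (-1) = -a⁻¹ s 0`.
noncomputable def treeProfile (a θ : ℝ) (i : ℤ) : ℝ :=
  (a ^ i)⁻¹ * (a * sin ((i + 1) * θ) + sin (i * θ))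

section TreeProfile

variable {a θ : ℝ}

theorem treeProfile_recurrence (ha : a ≠ 0) (i : ℤ) :
    treeProfile a θ (i - 1) + a ^ 2 * treeProfile a θ (i + 1) =
      2 * a * cos θ * treeProfile a θ i := by
  have hsum (x : ℝ) : sin (x + θ) + sin (x - θ) = 2 * cos θ * sin x := by
    rw [sin_add, sin_sub]; ring
  have h1 := hsum ((i + 1) * θ)
  have h2 := hsum (i * θ)
  simp only [treeProfile, zpow_sub_one₀ ha, zpow_add_one₀ ha]
  push_cast
  field_simp
  ring_nf at h1 h2 ⊢
  linear_combination a * h1 + h2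

theorem treeProfile_neg_one : treeProfile a θ (-1) = -treeProfile a θ 0 := by
  simp [treeProfile, sin_neg]

theorem treeProfile_of_mul_eq_pi (ha : a ≠ 0) {k : ℤ} (hk : k * θ = π) :
    treeProfile a θ k = -treeProfile a θ (k - 1) := by
  simp only [treeProfile, zpow_sub_one₀ ha]
  push_cast
  rw [sub_add_cancel, add_mul, sub_mul, one_mul, hk, sin_pi_sub, sin_pi, add_comm π, sin_add_pi]
  field_simp
  ring

theorem treeProfile_nonneg (ha : 0 < a) (hθ : 0 ≤ θ) {i : ℤ} (hi : 0 ≤ i) (hiθ : (i + 1) * θ ≤ π) :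
    0 ≤ treeProfile a θ i := by
  have hs (x : ℝ) (h0 : 0 ≤ x) (hx : x ≤ i + 1) : 0 ≤ sin (x * θ) :=
    sin_nonneg_of_nonneg_of_le_pi (by positivity) (by nlinarith)
  have := hs i (by exact_mod_cast hi) (by linarith)
  have := hs (i + 1) (by positivity) le_rfl
  unfold treeProfile
  positivity

theorem treeProfile_zero_pos (ha : 0 < a) (h0 : 0 < θ) (hπ : θ < π) : 0 < treeProfile a θ 0 := by
  simpa [treeProfile] using mul_pos ha (sin_pos_of_pos_of_lt_pi h0 hπ)

end TreeProfile

namespace SimpleGraph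

section Girth

variable {V : Type*} {G : SimpleGraph V} {a b w x : V}

theorem Adj.dist_le_dist_add_one_left (h : G.Adj a b) (x : V) : G.dist a x ≤ G.dist b x + 1 := by
  simpa [dist_eq_one_iff_adj.mpr h, add_comm] using h.reachable.dist_triangle_left x

theorem Adj.dist_le_dist_add_one_right (h : G.Adj a b) (x : V) : G.dist x b ≤ G.dist x a + 1 := by
  simpa [dist_eq_one_iff_adj.mpr h] using h.reachable.dist_triangle_right x

theorem Walk.dist_add_dist_le_length (p : G.Walk a b) (hw : w ∈ p.support) :
    G.dist a w + G.dist w b ≤ p.length := by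
  obtain ⟨q, r, rfl⟩ := mem_support_iff_exists_append.mp hw
  rw [length_append]
  exact add_le_add (dist_le q) (dist_le r)

theorem exists_adj_dist_add_one_eq (h : G.dist x w ≠ 0) :
    ∃ q, G.Adj w q ∧ G.dist x q + 1 = G.dist x w := by
  rw [dist_comm] at h
  obtain ⟨p, hp⟩ := exists_walk_of_dist_ne_zero h
  cases p with
  | nil => exact absurd dist_self h
  | cons hwq p =>
    refine ⟨_, hwq, ?_⟩
    have := dist_le p
    have := hwq.dist_le_dist_add_one_left x
    rw [Walk.length_cons] at hp
    rw [dist_comm (u := x), dist_comm (u := x)]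
    omega

theorem egirth_le_length_add_one (hab : G.Adj a b) (p : G.Walk b a) (he : s(a, b) ∉ p.edges) :
    G.egirth ≤ (p.length + 1 : ℕ) := by
  classical
  have hcycle : (Walk.cons hab p.bypass).IsCycle :=
    (Walk.cons_isCycle_iff _ hab).mpr ⟨p.bypass_isPath, fun h => he (p.edges_bypass_subset_edges h)⟩
  calc G.egirth ≤ (Walk.cons hab p.bypass).length := egirth_le_length hcycle
    _ ≤ (p.length + 1 : ℕ) := by
      rw [Walk.length_cons]
      exact_mod_cast Nat.add_le_add_right p.length_bypass_le_length 1

theorem egirth_le_of_adj_of_dist_eq (hab : G.Adj a b) (hx : G.Reachable x a)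
    (hd : G.dist x a = G.dist x b) : G.egirth ≤ (2 * G.dist x a + 1 : ℕ) := by
  obtain ⟨P, hP⟩ := hx.exists_walk_length_eq_dist
  obtain ⟨Q, hQ⟩ := (hx.trans hab.reachable).exists_walk_length_eq_dist
  have hab' := dist_eq_one_iff_adj.mpr hab
  have hba' := dist_eq_one_iff_adj.mpr hab.symm
  have he : s(a, b) ∉ (Q.reverse.append P).edges := by
    rw [Walk.edges_append, Walk.edges_reverse, List.mem_append, List.mem_reverse]
    rintro (h | h)
    · have := Q.dist_add_dist_le_length (Q.fst_mem_support_of_mem_edges h)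
      omega
    · have := P.dist_add_dist_le_length (P.snd_mem_support_of_mem_edges h)
      omega
  have := egirth_le_length_add_one hab _ he
  rwa [Walk.length_append, Walk.length_reverse, hP, hQ, ← hd, ← two_mul] at this

theorem egirth_le_of_adj_of_adj_of_dist_eq (hwa : G.Adj w a) (hwb : G.Adj w b)
    (hab : a ≠ b) (hw : G.dist x w = G.dist x a + 1) (hd : G.dist x a = G.dist x b) :
    G.egirth ≤ (2 * G.dist x a + 2 : ℕ) := by
  have hxw : G.Reachable x w := Reachable.of_dist_ne_zero (by omega)
  obtain ⟨P, hP⟩ := (hxw.trans hwa.reachable).exists_walk_length_eq_dist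
  obtain ⟨Q, hQ⟩ := (hxw.trans hwb.reachable).exists_walk_length_eq_dist
  have hwa' := dist_eq_one_iff_adj.mpr hwa.symm
  have hwb' := dist_eq_one_iff_adj.mpr hwb.symm
  have he : s(w, a) ∉ ((P.reverse.append Q).concat hwb.symm).edges := by
    rw [Walk.edges_concat, List.concat_eq_append, List.mem_append, Walk.edges_append,
      Walk.edges_reverse, List.mem_append, List.mem_reverse, List.mem_singleton, Sym2.eq_iff]
    rintro ((h | h) | h)
    · have := P.dist_add_dist_le_length (P.fst_mem_support_of_mem_edges h)
      omega
    · have := Q.dist_add_dist_le_length (Q.fst_mem_support_of_mem_edges h)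
      omega
    · grind
  have := egirth_le_length_add_one hwa _ he
  rwa [Walk.length_concat, Walk.length_append, Walk.length_reverse, hP, hQ, ← hd,
    add_assoc, ← two_mul] at this

theorem dist_eq_add_one_of_adj_of_ne {q j : V} (hg : (2 * G.dist x w + 2 : ℕ) ≤ G.egirth)
    (hq : G.Adj w q) (hqw : G.dist x q + 1 = G.dist x w) (hj : G.Adj w j) (hjq : j ≠ q) :
    G.dist x j = G.dist x w + 1 := by
  have h1 := hj.dist_le_dist_add_one_right x
  have h2 := hj.symm.dist_le_dist_add_one_right x
  have hlt : ∀ n : ℕ, n < 2 * G.dist x w + 2 → ¬ G.egirth ≤ n := fun n hn h =>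
    absurd (hg.trans h) (by exact_mod_cast Nat.not_le.mpr hn)
  rcases (by omega : G.dist x j = G.dist x w ∨ G.dist x j + 1 = G.dist x w ∨
      G.dist x j = G.dist x w + 1) with hjw | hjw | hjw
  · exact absurd (egirth_le_of_adj_of_dist_eq hj (Reachable.of_dist_ne_zero (by omega)) hjw.symm)
      (hlt _ (by omega))
  · exact absurd (egirth_le_of_adj_of_adj_of_dist_eq hj hq hjq hjw.symm (by omega))
      (hlt _ (by omega))
  · exact hjw

theorem Adj.dist_eq_add_one_of_lt (hab : G.Adj a b) (h : G.dist a w < G.dist b w) :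
    G.dist b w = G.dist a w + 1 := by
  have := hab.symm.dist_le_dist_add_one_left w
  omega

end Girth

section TestFunction

variable {V : Type*} [Fintype V] {G : SimpleGraph V} {d : ℕ}

theorem add_mul_le_sum_neighborFinset (hreg : G.IsRegularOfDegree d) {w q : V}
    (hq : G.Adj w q) {y : V → ℝ} {m : ℝ} (hm : ∀ j, G.Adj w j → j ≠ q → m ≤ y j) :
    y q + (d - 1) * m ≤ ∑ j ∈ G.neighborFinset w, y j := by
  have hmem : q ∈ G.neighborFinset w := (mem_neighborFinset G w q).mpr hq
  have hcard : (((G.neighborFinset w).erase q).card : ℝ) = d - 1 := by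
    rw [Finset.card_erase_of_mem hmem, card_neighborFinset_eq_degree, hreg w,
      Nat.cast_pred (hreg w ▸ G.degree_pos_iff_exists_adj w |>.mpr ⟨q, hq⟩)]
  rw [← Finset.add_sum_erase _ _ hmem, ← hcard, ← nsmul_eq_mul]
  gcongr
  refine Finset.card_nsmul_le_sum _ _ _ fun j hj => hm j ?_ (Finset.ne_of_mem_erase hj)
  exact (mem_neighborFinset G w j).mp (Finset.mem_of_mem_erase hj)

theorem algConn_le_of_sum_eq_zero {x : V → ℝ} (hx : x ≠ 0) (hs : ∑ i, x i = 0) :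
    algConn V G ≤ (∑ i, ∑ j, if G.Adj i j then (x i - x j) ^ 2 else 0) / (2 * ∑ i, x i ^ 2) := by
  refine csInf_le ⟨0, ?_⟩ ⟨x, hx, hs, rfl⟩
  rintro r ⟨y, -, -, rfl⟩
  refine div_nonneg (Finset.sum_nonneg fun i _ => Finset.sum_nonneg fun j _ => ?_) (by positivity)
  split_ifs <;> positivity

theorem sum_sum_adj_sq_sub_eq (hreg : G.IsRegularOfDegree d) (x : V → ℝ) :
    (∑ i, ∑ j, if G.Adj i j then (x i - x j) ^ 2 else 0) =
      2 * (d * (x ⬝ᵥ x) - x ⬝ᵥ (G.adjMatrix ℝ *ᵥ x)) := by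
  have := G.lapMatrix_toLinearMap₂' ℝ x
  rw [toLinearMap₂'_apply', lapMatrix, sub_mulVec, dotProduct_sub, dotProduct_mulVec_degMatrix]
    at this
  simp only [hreg _, mul_assoc, ← Finset.mul_sum] at this
  rw [dotProduct]
  linarith

theorem dotProduct_adjMatrix_mulVec_comm (f h : V → ℝ) :
    h ⬝ᵥ (G.adjMatrix ℝ *ᵥ f) = f ⬝ᵥ (G.adjMatrix ℝ *ᵥ h) := by
  rw [dotProduct_mulVec, ← vecMul_transpose, transpose_adjMatrix, dotProduct_comm]

theorem mul_dotProduct_le_of_disjoint {f h : V → ℝ} (hf : 0 ≤ f) (hh : 0 ≤ h)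
    (hfh : ∀ w, f w * h w = 0) {L : ℝ}
    (hfL : L * (f ⬝ᵥ f) ≤ f ⬝ᵥ (G.adjMatrix ℝ *ᵥ (f - h)))
    (hhL : L * (h ⬝ᵥ h) ≤ h ⬝ᵥ (G.adjMatrix ℝ *ᵥ (h - f))) (α β : ℝ) :
    L * ((α • f - β • h) ⬝ᵥ (α • f - β • h)) ≤
      (α • f - β • h) ⬝ᵥ (G.adjMatrix ℝ *ᵥ (α • f - β • h)) := by
  have hcross : 0 ≤ f ⬝ᵥ (G.adjMatrix ℝ *ᵥ h) := by
    refine dotProduct_nonneg_of_nonneg hf fun w => ?_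
    rw [adjMatrix_mulVec_apply]
    exact Finset.sum_nonneg fun j _ => hh j
  have hfh' : f ⬝ᵥ h = 0 := Finset.sum_eq_zero fun w _ => hfh w
  have hsymm := dotProduct_adjMatrix_mulVec_comm (G := G) f h
  simp only [mulVec_sub, mulVec_smul, dotProduct_sub, sub_dotProduct, dotProduct_smul,
    smul_dotProduct, smul_eq_mul, dotProduct_comm h f, hfh'] at hfL hhL ⊢
  rw [hsymm] at hhL ⊢
  nlinarith [mul_le_mul_of_nonneg_left hfL (sq_nonneg α),
    mul_le_mul_of_nonneg_left hhL (sq_nonneg β), mul_nonneg (sq_nonneg (α - β)) hcross]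

theorem algConn_le_of_disjoint (hreg : G.IsRegularOfDegree d) {f h : V → ℝ} (hf : 0 ≤ f)
    (hh : 0 ≤ h) (hfh : ∀ w, f w * h w = 0) (hf0 : 0 < ∑ w, f w) (hh0 : 0 < ∑ w, h w) {L : ℝ}
    (hfL : L * (f ⬝ᵥ f) ≤ f ⬝ᵥ (G.adjMatrix ℝ *ᵥ (f - h)))
    (hhL : L * (h ⬝ᵥ h) ≤ h ⬝ᵥ (G.adjMatrix ℝ *ᵥ (h - f))) :
    algConn V G ≤ d - L := by
  set x := (∑ w, h w) • f - (∑ w, f w) • h with hx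
  have hsum : ∑ i, x i = 0 := by
    simp only [hx, Pi.sub_apply, Pi.smul_apply, smul_eq_mul, Finset.sum_sub_distrib,
      ← Finset.mul_sum]
    ring
  obtain ⟨w, -, hw⟩ :=
    Finset.exists_lt_of_sum_lt (by simpa using hf0 : ∑ _w : V, (0 : ℝ) < ∑ w, f w)
  have hxw : x w ≠ 0 := by
    have : h w = 0 := (mul_eq_zero.mp (hfh w)).resolve_left hw.ne'
    simp only [hx, Pi.sub_apply, Pi.smul_apply, smul_eq_mul, this, mul_zero, sub_zero]
    exact (mul_pos hh0 hw).ne'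
  have hx0 : x ≠ 0 := fun h0 => hxw (congrFun h0 w)
  have hxx : 0 < x ⬝ᵥ x := lt_of_le_of_ne (Finset.sum_nonneg fun i _ => mul_self_nonneg (x i))
    (Ne.symm (dotProduct_self_eq_zero.not.mpr hx0))
  have hsq : ∑ i, x i ^ 2 = x ⬝ᵥ x := by simp only [dotProduct, sq]
  refine (algConn_le_of_sum_eq_zero hx0 hsum).trans ?_
  rw [sum_sum_adj_sq_sub_eq hreg, hsq, div_le_iff₀ (by positivity)]
  linarith [mul_dotProduct_le_of_disjoint hf hh hfh hfL hhL (∑ w, h w) (∑ w, f w)]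

end TestFunction

section SideFunction

variable {V : Type*} {G : SimpleGraph V} {c : ℤ → ℝ} {r : ℕ} {u v w : V}

noncomputable def sideFunction (G : SimpleGraph V) (c : ℤ → ℝ) (r : ℕ) (u v w : V) : ℝ :=
  if G.dist u w < G.dist v w ∧ G.dist u w ≤ r then c (G.dist u w) else 0

theorem sideFunction_of_lt (h : G.dist u w < G.dist v w) (hr : G.dist u w ≤ r) :
    G.sideFunction c r u v w = c (G.dist u w) :=
  if_pos ⟨h, hr⟩

theorem sideFunction_of_le (h : G.dist v w ≤ G.dist u w) : G.sideFunction c r u v w = 0 :=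
  if_neg fun h' => by omega

theorem sideFunction_nonneg (hc : ∀ i : ℕ, i ≤ r → 0 ≤ c i) (w : V) :
    0 ≤ G.sideFunction c r u v w := by
  unfold sideFunction
  split_ifs with h
  exacts [hc _ h.2, le_rfl]

theorem sideFunction_le (hc : 0 ≤ c r) (h : r ≤ G.dist u w) : G.sideFunction c r u v w ≤ c r := by
  unfold sideFunction
  split_ifs with h'
  · rw [show G.dist u w = r by omega]
  · exact hc

theorem sideFunction_mul_sideFunction (w : V) :
    G.sideFunction c r u v w * G.sideFunction c r v u w = 0 := by
  rcases le_total (G.dist u w) (G.dist v w) with h | h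
  · rw [sideFunction_of_le (u := v) h, mul_zero]
  · rw [sideFunction_of_le h, zero_mul]

theorem exists_adj_sideFunction_sub_eq (huv : G.Adj u v) (hc : c (-1) = -c 0)
    (h : G.dist u w < G.dist v w) (hr : G.dist u w ≤ r) :
    ∃ q, G.Adj w q ∧ G.dist v q + 1 = G.dist v w ∧
      G.sideFunction c r u v q - G.sideFunction c r v u q = c (G.dist u w - 1) := by
  have hvw := huv.dist_eq_add_one_of_lt h
  rcases Nat.eq_zero_or_pos (G.dist u w) with h0 | hpos
  · have hvw' : G.Reachable v w := Reachable.of_dist_ne_zero (by omega)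
    obtain rfl : u = w := (huv.reachable.trans hvw').dist_eq_zero_iff.mp h0
    refine ⟨v, huv, by simp [hvw], ?_⟩
    rw [sideFunction_of_le (by simp), sideFunction_of_lt (by simp [dist_eq_one_iff_adj.mpr huv])
      (by simp), h0]
    simp [hc]
  · obtain ⟨q, hq, hqu⟩ := exists_adj_dist_add_one_eq hpos.ne'
    have := hq.symm.dist_le_dist_add_one_right v
    have := huv.symm.dist_le_dist_add_one_left q
    refine ⟨q, hq, by omega, ?_⟩
    rw [sideFunction_of_lt (w := q) (by omega) (by omega), sideFunction_of_le (w := q) (by omega),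
      sub_zero]
    congr 1
    omega

theorem le_sideFunction_sub_of_adj (huv : G.Adj u v) (hg : (2 * r + 2 : ℕ) ≤ G.egirth)
    (htop : c (r + 1) = -c r) (hc : ∀ i : ℕ, i ≤ r → 0 ≤ c i)
    (h : G.dist u w < G.dist v w) (hr : G.dist u w ≤ r) {q j : V} (hq : G.Adj w q)
    (hqw : G.dist v q + 1 = G.dist v w) (hj : G.Adj w j) (hjq : j ≠ q) :
    c (G.dist u w + 1) ≤ G.sideFunction c r u v j - G.sideFunction c r v u j := by
  have hvw := huv.dist_eq_add_one_of_lt h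
  rcases hr.lt_or_eq with hr | hr
  · have hvj := dist_eq_add_one_of_adj_of_ne
      (le_trans (by exact_mod_cast (show 2 * G.dist v w + 2 ≤ 2 * r + 2 by omega)) hg) hq hqw hj hjq
    have := hj.dist_le_dist_add_one_right u
    have := huv.symm.dist_le_dist_add_one_left j
    rw [sideFunction_of_lt (w := j) (by omega) (by omega), sideFunction_of_le (w := j) (by omega),
      sub_zero, show G.dist u j = G.dist u w + 1 by omega, Nat.cast_succ]
  · have := hj.symm.dist_le_dist_add_one_right v
    rw [hr, htop]
    linarith [sideFunction_nonneg (G := G) (u := u) (v := v) hc j,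
      sideFunction_le (G := G) (v := u) (hc r le_rfl) (show r ≤ G.dist v j by omega)]

variable [Fintype V] {d : ℕ}

theorem mul_le_adjMatrix_mulVec_sideFunction_sub {L : ℝ} (hreg : G.IsRegularOfDegree d)
    (huv : G.Adj u v) (hg : (2 * r + 2 : ℕ) ≤ G.egirth)
    (hrec : ∀ i : ℕ, c (i - 1) + (d - 1) * c (i + 1) = L * c i) (hbot : c (-1) = -c 0)
    (htop : c (r + 1) = -c r) (hc : ∀ i : ℕ, i ≤ r → 0 ≤ c i)
    (h : G.dist u w < G.dist v w) (hr : G.dist u w ≤ r) :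
    L * c (G.dist u w) ≤
      (G.adjMatrix ℝ *ᵥ (G.sideFunction c r u v - G.sideFunction c r v u)) w := by
  obtain ⟨q, hq, hqw, hqval⟩ := exists_adj_sideFunction_sub_eq huv hbot h hr
  have := add_mul_le_sum_neighborFinset hreg hq
    (y := G.sideFunction c r u v - G.sideFunction c r v u)
    fun j hj hjq => le_sideFunction_sub_of_adj huv hg htop hc h hr hq hqw hj hjq
  rwa [Pi.sub_apply, hqval, hrec, ← adjMatrix_mulVec_apply] at this

theorem mul_dotProduct_le_sideFunction {L : ℝ} (hreg : G.IsRegularOfDegree d)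
    (huv : G.Adj u v) (hg : (2 * r + 2 : ℕ) ≤ G.egirth)
    (hrec : ∀ i : ℕ, c (i - 1) + (d - 1) * c (i + 1) = L * c i) (hbot : c (-1) = -c 0)
    (htop : c (r + 1) = -c r) (hc : ∀ i : ℕ, i ≤ r → 0 ≤ c i) :
    L * (G.sideFunction c r u v ⬝ᵥ G.sideFunction c r u v) ≤
      G.sideFunction c r u v ⬝ᵥ
        (G.adjMatrix ℝ *ᵥ (G.sideFunction c r u v - G.sideFunction c r v u)) := by
  simp only [dotProduct, Finset.mul_sum]
  refine Finset.sum_le_sum fun w _ => ?_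
  by_cases hw : G.dist u w < G.dist v w ∧ G.dist u w ≤ r
  · rw [sideFunction_of_lt hw.1 hw.2, mul_left_comm]
    exact mul_le_mul_of_nonneg_left
      (mul_le_adjMatrix_mulVec_sideFunction_sub hreg huv hg hrec hbot htop hc hw.1 hw.2) (hc _ hw.2)
  · simp [sideFunction, hw]

theorem sum_sideFunction_pos (huv : G.Adj u v) (hc : ∀ i : ℕ, i ≤ r → 0 ≤ c i) (h0 : 0 < c 0) :
    0 < ∑ w, G.sideFunction c r u v w := by
  have hu : G.sideFunction c r u v u = c 0 := by
    rw [sideFunction_of_lt] <;> simp [dist_eq_one_iff_adj.mpr huv.symm]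
  exact Finset.sum_pos' (fun w _ => sideFunction_nonneg hc w) ⟨u, Finset.mem_univ u, hu ▸ h0⟩

end SideFunction

section Regular

variable {V : Type*} [Fintype V] {G : SimpleGraph V} {d : ℕ} {u v : V}

theorem algConn_le_add_one (hreg : G.IsRegularOfDegree d) (huv : G.Adj u v) :
    algConn V G ≤ d + 1 := by
  have hsingle (a b : V) (hab : G.Adj a b) :
      (Pi.single a 1 : V → ℝ) ⬝ᵥ (G.adjMatrix ℝ *ᵥ (Pi.single a 1 - Pi.single b 1)) = -1 := by
    simp [single_dotProduct, Finset.sum_sub_distrib, Finset.sum_pi_single', hab]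
  have hdisj (w : V) : (Pi.single u 1 : V → ℝ) w * (Pi.single v 1 : V → ℝ) w = 0 := by
    by_cases hw : w = u
    · simp [hw, huv.ne]
    · simp [hw]
  have := algConn_le_of_disjoint hreg (f := Pi.single u 1) (h := Pi.single v 1) (L := -1)
    (fun _ => by simp only [Pi.zero_apply, Pi.single_apply]; positivity)
    (fun _ => by simp only [Pi.zero_apply, Pi.single_apply]; positivity) hdisj (by simp) (by simp)
    (by simp [hsingle u v huv]) (by simp [hsingle v u huv.symm])
  simpa using this

theorem algConn_le_of_two_mul_le_egirth_of_two_le (hreg : G.IsRegularOfDegree d) (hd : 2 ≤ d)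
    {k : ℕ} (hk : 2 ≤ k) (hg : (2 * k : ℕ) ≤ G.egirth) (huv : G.Adj u v) :
    algConn V G ≤ d - 2 * √(d - 1) * cos (π / k) := by
  obtain ⟨r, rfl⟩ : ∃ r, k = r + 1 := ⟨k - 1, by omega⟩
  have hd' : (1 : ℝ) < d := by exact_mod_cast hd
  have ha : 0 < √((d : ℝ) - 1) := sqrt_pos.mpr (by linarith)
  set c := treeProfile √((d : ℝ) - 1) (π / (r + 1 : ℕ))
  have hrec (i : ℕ) :
      c (i - 1) + (d - 1) * c (i + 1) = 2 * √(d - 1) * cos (π / (r + 1 : ℕ)) * c i := by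
    rw [← treeProfile_recurrence ha.ne', sq_sqrt (by linarith)]
  have hθ : 0 < π / (r + 1 : ℕ) := by positivity
  have hθπ : π / (r + 1 : ℕ) < π := div_lt_self pi_pos (by exact_mod_cast hk)
  have hc (i : ℕ) (hi : i ≤ r) : 0 ≤ c i := by
    refine treeProfile_nonneg ha hθ.le (by positivity) ?_
    rw [mul_div_assoc', div_le_iff₀ (by positivity)]
    have : (i : ℝ) + 1 ≤ (r + 1 : ℕ) := by exact_mod_cast Nat.succ_le_succ hi
    push_cast at this ⊢
    nlinarith [pi_pos]
  have htop : c (r + 1) = -c r := by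
    simpa using treeProfile_of_mul_eq_pi ha.ne' (k := (r + 1 : ℕ)) (by push_cast; field_simp)
  have hg' : (2 * r + 2 : ℕ) ≤ G.egirth := by rwa [mul_add, mul_one] at hg
  exact algConn_le_of_disjoint hreg (sideFunction_nonneg hc) (sideFunction_nonneg hc)
    sideFunction_mul_sideFunction
    (sum_sideFunction_pos huv hc (treeProfile_zero_pos ha hθ hθπ))
    (sum_sideFunction_pos huv.symm hc (treeProfile_zero_pos ha hθ hθπ))
    (mul_dotProduct_le_sideFunction hreg huv hg' hrec treeProfile_neg_one htop hc)
    (mul_dotProduct_le_sideFunction hreg huv.symm hg' hrec treeProfile_neg_one htop hc)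

theorem algConn_le_of_two_mul_le_egirth (hreg : G.IsRegularOfDegree d) (hd : 2 ≤ d)
    {k : ℕ} (hk : 1 ≤ k) (hg : (2 * k : ℕ) ≤ G.egirth) (huv : G.Adj u v) :
    algConn V G ≤ d - 2 * √(d - 1) * cos (π / k) := by
  rcases hk.eq_or_lt with rfl | hk
  · have hd' : (2 : ℝ) ≤ d := by exact_mod_cast hd
    have : 1 ≤ √((d : ℝ) - 1) := one_le_sqrt.mpr (by linarith)
    have := algConn_le_add_one hreg huv
    simp only [Nat.cast_one, div_one, cos_pi]
    linarith
  · exact algConn_le_of_two_mul_le_egirth_of_two_le hreg hd hk hg huv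

end Regular

end SimpleGraph

/-- **Theorem (cubic graphs).** A cubic (3-regular) graph of girth `g` has algebraic
connectivity at most `3 - 2√2·cos(π/⌊g/2⌋)`. -/
theorem cubic_algConn_le_girth_bound (n g : ℕ) (G : SimpleGraph (Fin n))
    (hcubic : ∀ v, G.degree v = 3) (hg : G.egirth = (g : ℕ∞)) :
    algConn (Fin n) G ≤ 3 - 2 * Real.sqrt 2 * Real.cos (Real.pi / (g / 2 : ℕ)) := by
  have h3 : 3 ≤ g := by exact_mod_cast hg ▸ G.three_le_egirth
  have hk : (2 * (g / 2) : ℕ) ≤ G.egirth := hg ▸ by exact_mod_cast Nat.mul_div_le g 2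
  obtain ⟨a, -, -, -⟩ := (SimpleGraph.exists_egirth_eq_length (G := G)).mpr fun h => by
    simpa [hg] using h.egirth_eq_top
  obtain ⟨b, hab⟩ := (G.degree_pos_iff_exists_adj a).mp (by rw [hcubic]; norm_num)
  have := SimpleGraph.algConn_le_of_two_mul_le_egirth hcubic (by norm_num) (by omega) hk hab
  norm_num at this
  exact this
end

section
/- Let T_K be the graph consisting of two disjoint perfect binary trees of height K whose roots are joined by an edge. If a cubic graph G contains T_K as a subgraph, then λ₂(G) ≤ 3 − 2√2·cos(π/K). -/
open scoped Classical

/-- The graph `T_K`: two disjoint perfect binary trees of height `K` (each with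
`2^(K+1) - 1` vertices, numbered heap-style so that vertex number `i+1` has children
numbered `2(i+1)` and `2(i+1)+1`, the root having number `1`), together with an edge
joining the two roots. -/
def TK (K : ℕ) : SimpleGraph (Bool × Fin (2 ^ (K + 1) - 1)) :=
  SimpleGraph.fromRel (fun a b =>
    (a.1 = b.1 ∧ ((b.2 : ℕ) + 1 = 2 * ((a.2 : ℕ) + 1) ∨
                  (b.2 : ℕ) + 1 = 2 * ((a.2 : ℕ) + 1) + 1)) ∨
    ((a.2 : ℕ) = 0 ∧ (b.2 : ℕ) = 0 ∧ a.1 ≠ b.1))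

/-! Test the Rayleigh quotient of `G` on the vector equal to `c(d)` at depth `d` in one tree of
the copy of `T_K`, to `-c(d)` at depth `d` in the other, and to `0` off the copy, where
`c(d) = sin(dπ/K) / √2 ^ d`. It vanishes on the leaves (`c(K) = 0`), and every inner vertex of
`T_K` already has degree `3` there, so in the cubic graph `G` each edge along which the vector
varies is an edge of `T_K`. Summing over levels, the quotient becomes a Rayleigh quotient of
`d ↦ sin(dθ)` on a path, which is `3 - 2√2 cos θ` because
`sin((d - 1)θ) + sin((d + 1)θ) = 2 cos θ sin(dθ)`. For `K = 1` the profile `c = (1, 0)` gives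
the quotient `4 ≤ 3 + 2√2`. -/

open Finset Real Function

theorem Function.Injective.sum_extend_zero {V W : Type*} [Fintype V] [Fintype W] {f : W → V}
    (hf : Injective f) (φ : ℝ → ℝ) (hφ : φ 0 = 0) (y : W → ℝ) :
    ∑ v, φ (extend f y 0 v) = ∑ w, φ (y w) := by
  refine (Fintype.sum_of_injective f hf _ _ (fun v hv => ?_) fun w => by rw [hf.extend_apply]).symm
  rw [extend_apply' _ _ _ (by simpa using hv), Pi.zero_apply, hφ]

namespace SimpleGraph

variable {V W : Type*} [Fintype V] [Fintype W]

noncomputable def edgeEnergy (G : SimpleGraph V) (x : V → ℝ) : ℝ :=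
  ∑ i, ∑ j, if G.Adj i j then (x i - x j) ^ 2 else 0

theorem edgeEnergy_nonneg (G : SimpleGraph V) (x : V → ℝ) : 0 ≤ G.edgeEnergy x :=
  sum_nonneg fun _ _ => sum_nonneg fun _ _ => by split_ifs <;> positivity

section Transfer

variable {H : SimpleGraph W} {G : SimpleGraph V} {f : W → V}

theorem exists_adj_eq_of_degree_le (hf : Injective f)
    (hhom : ∀ a b, H.Adj a b → G.Adj (f a) (f b)) {w : W} (hdeg : G.degree (f w) ≤ H.degree w)
    {v : V} (hv : G.Adj (f w) v) :
    ∃ w', H.Adj w w' ∧ f w' = v := by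
  have hsub : (H.neighborFinset w).map ⟨f, hf⟩ ⊆ G.neighborFinset (f w) := by
    intro u hu
    obtain ⟨a, ha, rfl⟩ := mem_map.mp hu
    exact (G.mem_neighborFinset _ _).mpr (hhom _ _ ((H.mem_neighborFinset _ _).mp ha))
  have heq := eq_of_subset_of_card_le hsub (by simpa [card_neighborFinset_eq_degree] using hdeg)
  obtain ⟨a, ha, rfl⟩ := mem_map.mp (heq ▸ (G.mem_neighborFinset _ _).mpr hv)
  exact ⟨a, (H.mem_neighborFinset _ _).mp ha, rfl⟩

theorem edgeEnergy_extend_zero (hf : Injective f) (hhom : ∀ a b, H.Adj a b → G.Adj (f a) (f b))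
    (y : W → ℝ) (hnbr : ∀ w, y w ≠ 0 → ∀ v, G.Adj (f w) v → ∃ w', H.Adj w w' ∧ f w' = v) :
    G.edgeEnergy (extend f y 0) = H.edgeEnergy y := by
  set x := extend f y 0 with hx
  have hxf : ∀ w, x (f w) = y w := hf.extend_apply y 0
  have from_ne_zero : ∀ u v, G.Adj u v → x u ≠ 0 → ∃ a b, H.Adj a b ∧ f a = u ∧ f b = v := by
    intro u v huv hu
    obtain ⟨a, rfl⟩ : ∃ a, f a = u := by
      by_contra h
      exact hu (by rw [hx, extend_apply' _ _ _ h, Pi.zero_apply])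
    obtain ⟨b, hab, rfl⟩ := hnbr a (hxf a ▸ hu) v huv
    exact ⟨a, b, hab, rfl, rfl⟩
  -- an edge of `G` along which `x` varies has an endpoint where `x ≠ 0`, hence comes from `H`
  have from_ne : ∀ u v, G.Adj u v → x u ≠ x v → ∃ a b, H.Adj a b ∧ f a = u ∧ f b = v := by
    intro u v huv hne
    by_cases hu : x u = 0
    · obtain ⟨b, a, hba, rfl, rfl⟩ := from_ne_zero v u huv.symm (hu ▸ hne.symm)
      exact ⟨a, b, hba.symm, rfl, rfl⟩
    · exact from_ne_zero u v huv hu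
  simp only [edgeEnergy, ← Fintype.sum_prod_type']
  refine (Fintype.sum_of_injective (Prod.map f f) (hf.prodMap hf) _ _ ?_ ?_).symm
  · rintro ⟨u, v⟩ huv
    refine ite_eq_right_iff.mpr fun hG => ?_
    by_contra h
    obtain ⟨a, b, -, rfl, rfl⟩ := from_ne u v hG fun h' => h (by simp [h'])
    exact huv ⟨(a, b), rfl⟩
  · rintro ⟨a, b⟩
    simp only [Prod.map, hxf]
    split_ifs with hH hG hG
    · rfl
    · exact absurd (hhom a b hH) hG
    · by_contra hne
      obtain ⟨a', b', hab, ha, hb⟩ :=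
        from_ne _ _ hG (by rw [hxf, hxf]; exact fun h => hne (by simp [h]))
      exact hH (hf ha ▸ hf hb ▸ hab)
    · rfl

end Transfer

end SimpleGraph

theorem algConn_le_of_edgeEnergy_le {V : Type*} [Fintype V] (G : SimpleGraph V) (x : V → ℝ)
    (hx : x ≠ 0) (hsum : ∑ i, x i = 0) {lam : ℝ}
    (h : G.edgeEnergy x ≤ lam * (2 * ∑ i, x i ^ 2)) : algConn V G ≤ lam := by
  obtain ⟨i, hi⟩ := Function.ne_iff.mp hx
  have hpos : 0 < 2 * ∑ i, x i ^ 2 := by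
    have := sum_pos' (fun j _ => sq_nonneg (x j)) ⟨i, mem_univ i, pow_two_pos_of_ne_zero hi⟩
    positivity
  calc algConn V G ≤ G.edgeEnergy x / (2 * ∑ i, x i ^ 2) := by
        refine csInf_le ⟨0, ?_⟩ ⟨x, hx, hsum, rfl⟩
        rintro r ⟨y, -, -, rfl⟩
        exact div_nonneg (G.edgeEnergy_nonneg y) (by positivity)
    _ ≤ lam := (div_le_iff₀ hpos).mpr h

theorem sum_Ico_comp_log_two (F : ℕ → ℝ) (t : ℕ) :
    ∑ m ∈ Ico 1 (2 ^ (t + 1)), F (Nat.log 2 m) = ∑ d ∈ range (t + 1), 2 ^ d * F d := by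
  induction t with
  | zero => simp
  | succ t ih =>
    have hpow : 2 ^ (t + 1 + 1) = 2 * 2 ^ (t + 1) := pow_succ' 2 (t + 1)
    have hlevel : ∑ m ∈ Ico (2 ^ (t + 1)) (2 ^ (t + 1 + 1)), F (Nat.log 2 m) =
        2 ^ (t + 1) * F (t + 1) := by
      rw [sum_congr rfl fun m hm => by
          rw [Nat.log_eq_of_pow_le_of_lt_pow (mem_Ico.mp hm).1 (mem_Ico.mp hm).2],
        sum_const, Nat.card_Ico, hpow, show 2 * 2 ^ (t + 1) - 2 ^ (t + 1) = 2 ^ (t + 1) by omega,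
        nsmul_eq_mul]
      push_cast
      ring
    rw [← sum_Ico_consecutive _ Nat.one_le_two_pow (show 2 ^ (t + 1) ≤ 2 ^ (t + 1 + 1) by omega),
      ih, hlevel, sum_range_succ _ (t + 1)]

namespace TK

variable {K : ℕ} {p q : Bool × Fin (2 ^ (K + 1) - 1)}

def IsChild (p q : Bool × Fin (2 ^ (K + 1) - 1)) : Prop :=
  p.1 = q.1 ∧ ((q.2 : ℕ) + 1 = 2 * ((p.2 : ℕ) + 1) ∨ (q.2 : ℕ) + 1 = 2 * ((p.2 : ℕ) + 1) + 1)

def IsRootPair (p q : Bool × Fin (2 ^ (K + 1) - 1)) : Prop :=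
  (p.2 : ℕ) = 0 ∧ (q.2 : ℕ) = 0 ∧ p.1 ≠ q.1

theorem IsChild.asymm (h : IsChild p q) : ¬IsChild q p := by
  obtain ⟨-, h⟩ := h
  rintro ⟨-, h'⟩
  omega

theorem IsChild.ne (h : IsChild p q) : p ≠ q := by
  rintro rfl
  exact h.asymm h

theorem IsChild.not_isRootPair (h : IsChild p q) : ¬IsRootPair p q := by
  obtain ⟨-, h⟩ := h
  rintro ⟨-, h', -⟩
  omega

theorem IsRootPair.symm (h : IsRootPair p q) : IsRootPair q p :=
  ⟨h.2.1, h.1, h.2.2.symm⟩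

theorem adj_iff : (TK K).Adj p q ↔ IsChild p q ∨ IsChild q p ∨ IsRootPair p q := by
  rw [TK, SimpleGraph.fromRel_adj]
  constructor
  · rintro ⟨-, (h | h) | (h | h)⟩
    exacts [Or.inl h, Or.inr (Or.inr h), Or.inr (Or.inl h), Or.inr (Or.inr (IsRootPair.symm h))]
  · rintro (h | h | h)
    exacts [⟨h.ne, Or.inl (Or.inl h)⟩, ⟨h.ne.symm, Or.inr (Or.inl h)⟩,
      ⟨fun e => h.2.2 (e ▸ rfl), Or.inl (Or.inr h)⟩]

theorem ite_adj (g : ℝ) : (if (TK K).Adj p q then g else 0) =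
    (if IsChild p q then g else 0) + (if IsChild q p then g else 0) +
      (if IsRootPair p q then g else 0) := by
  rw [adj_iff]
  by_cases h1 : IsChild p q
  · simp [h1, h1.asymm, h1.not_isRootPair]
  by_cases h2 : IsChild q p
  · have h3 : ¬IsRootPair p q := fun h => h2.not_isRootPair h.symm
    simp [h1, h2, h3]
  by_cases h3 : IsRootPair p q <;> simp [h1, h2, h3]

theorem card_filter_isChild (p : Bool × Fin (2 ^ (K + 1) - 1)) :
    #(univ.filter (IsChild p)) = if (p.2 : ℕ) + 1 < 2 ^ K then 2 else 0 := by
  have hpow : 2 ^ (K + 1) = 2 * 2 ^ K := pow_succ' 2 K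
  split_ifs with hp
  · rw [card_eq_two]
    refine ⟨(p.1, ⟨2 * p.2 + 1, by omega⟩), (p.1, ⟨2 * p.2 + 2, by omega⟩), by simp, ?_⟩
    obtain ⟨a, i⟩ := p
    ext ⟨b, j⟩
    simp only [mem_filter, mem_univ, true_and, IsChild, mem_insert, mem_singleton, Prod.ext_iff,
      Fin.ext_iff]
    cases a <;> cases b <;> simp <;> omega
  · rw [card_eq_zero, filter_eq_empty_iff]
    rintro q - ⟨-, h⟩
    have := q.2.isLt
    omega

theorem exists_adj_not_isChild (p : Bool × Fin (2 ^ (K + 1) - 1)) :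
    ∃ q, (TK K).Adj p q ∧ ¬IsChild p q := by
  by_cases h0 : (p.2 : ℕ) = 0
  · exact ⟨(!p.1, p.2), adj_iff.mpr (Or.inr (Or.inr ⟨h0, h0, by simp⟩)), by simp [IsChild]⟩
  · have hparent : IsChild (p.1, ⟨(p.2 - 1) / 2, by omega⟩) p := ⟨rfl, by simp only; omega⟩
    exact ⟨_, adj_iff.mpr (Or.inr (Or.inl hparent)), hparent.asymm⟩

theorem three_le_degree (hp : (p.2 : ℕ) + 1 < 2 ^ K) : 3 ≤ (TK K).degree p := by
  obtain ⟨q, hq, hqp⟩ := exists_adj_not_isChild p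
  have hsub : insert q (univ.filter (IsChild p)) ⊆ (TK K).neighborFinset p := by
    intro r hr
    rw [SimpleGraph.mem_neighborFinset]
    rcases mem_insert.mp hr with rfl | hr
    · exact hq
    · exact adj_iff.mpr (Or.inl (mem_filter.mp hr).2)
  calc 3 = #(insert q (univ.filter (IsChild p))) := by
        rw [card_insert_of_notMem (by simpa using hqp), card_filter_isChild, if_pos hp]
    _ ≤ _ := card_le_card hsub

def depth (i : Fin (2 ^ (K + 1) - 1)) : ℕ := Nat.log 2 ((i : ℕ) + 1)

theorem depth_lt_iff (i : Fin (2 ^ (K + 1) - 1)) : depth i < K ↔ (i : ℕ) + 1 < 2 ^ K :=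
  Nat.log_lt_iff_lt_pow (by norm_num) (by omega)

theorem depth_le (i : Fin (2 ^ (K + 1) - 1)) : depth i ≤ K :=
  Nat.lt_succ_iff.mp ((Nat.log_lt_iff_lt_pow (by norm_num) (by omega)).mpr (by omega))

theorem IsChild.depth_eq (h : IsChild p q) : depth q.2 = depth p.2 + 1 := by
  obtain ⟨-, h⟩ := h
  have h1 : 2 ^ depth p.2 ≤ (p.2 : ℕ) + 1 := Nat.pow_log_le_self 2 (by omega)
  have h2 : (p.2 : ℕ) + 1 < 2 ^ depth p.2 * 2 :=
    pow_succ 2 _ ▸ Nat.lt_pow_succ_log_self (by norm_num) _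
  refine Nat.log_eq_of_pow_le_of_lt_pow ?_ ?_
  · rw [pow_succ]; omega
  · rw [pow_succ 2 (depth p.2 + 1), pow_succ 2 (depth p.2)]; omega

theorem sum_depth (F : ℕ → ℝ) :
    ∑ i : Fin (2 ^ (K + 1) - 1), F (depth i) = ∑ d ∈ range (K + 1), 2 ^ d * F d := by
  rw [← sum_Ico_comp_log_two, sum_Ico_eq_sum_range]
  exact (Fin.sum_univ_eq_sum_range (fun k => F (Nat.log 2 (k + 1))) _).trans (by simp [add_comm])

def levelVec (c : ℕ → ℝ) (p : Bool × Fin (2 ^ (K + 1) - 1)) : ℝ :=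
  (if p.1 then 1 else -1) * c (depth p.2)

theorem sum_levelVec (c : ℕ → ℝ) : ∑ p, levelVec (K := K) c p = 0 := by
  simp [levelVec, Fintype.sum_prod_type]

theorem sum_levelVec_sq (c : ℕ → ℝ) :
    ∑ p, levelVec (K := K) c p ^ 2 = 2 * ∑ d ∈ range (K + 1), 2 ^ d * c d ^ 2 := by
  simp [levelVec, Fintype.sum_prod_type, sum_depth fun d => c d ^ 2]

theorem levelVec_ne_zero {c : ℕ → ℝ} {d : ℕ} (hd : d ≤ K) (hc : c d ≠ 0) :
    levelVec (K := K) c ≠ 0 := by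
  have hlt : 2 ^ d - 1 < 2 ^ (K + 1) - 1 := by
    have := Nat.pow_le_pow_right (by norm_num : 0 < 2) hd
    have := Nat.one_le_two_pow (n := d)
    rw [pow_succ]; omega
  have hdepth : depth (⟨2 ^ d - 1, hlt⟩ : Fin (2 ^ (K + 1) - 1)) = d := by
    simp [depth, Nat.sub_add_cancel Nat.one_le_two_pow]
  intro h
  simpa [levelVec, hdepth, hc] using congrFun h (true, ⟨2 ^ d - 1, hlt⟩)

theorem lt_of_levelVec_ne_zero {c : ℕ → ℝ} (hcK : c K = 0) (hp : levelVec c p ≠ 0) :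
    (p.2 : ℕ) + 1 < 2 ^ K := by
  rw [← depth_lt_iff]
  refine (depth_le p.2).lt_of_ne fun h => hp ?_
  simp [levelVec, h, hcK]

theorem sum_isChild_levelVec (c : ℕ → ℝ) :
    ∑ p : Bool × Fin (2 ^ (K + 1) - 1), ∑ q,
      (if IsChild p q then (levelVec c p - levelVec c q) ^ 2 else 0) =
      4 * ∑ d ∈ range K, 2 ^ d * (c d - c (d + 1)) ^ 2 := by
  have hterm : ∀ p q : Bool × Fin (2 ^ (K + 1) - 1), IsChild p q →
      (levelVec c p - levelVec c q) ^ 2 = (c (depth p.2) - c (depth p.2 + 1)) ^ 2 := by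
    intro p q h
    rw [levelVec, levelVec, h.depth_eq, ← h.1]
    split_ifs <;> ring
  calc _ = ∑ p : Bool × Fin (2 ^ (K + 1) - 1), ∑ q,
        (if IsChild p q then (c (depth p.2) - c (depth p.2 + 1)) ^ 2 else 0) :=
        sum_congr rfl fun p _ => sum_congr rfl fun q _ => by
          split_ifs with h <;> simp [hterm p q, h]
    _ = ∑ p : Bool × Fin (2 ^ (K + 1) - 1),
        if depth p.2 < K then 2 * (c (depth p.2) - c (depth p.2 + 1)) ^ 2 else 0 := by
      refine sum_congr rfl fun p _ => ?_
      rw [← sum_filter, sum_const, card_filter_isChild]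
      simp only [depth_lt_iff]
      split_ifs <;> simp
    _ = 2 * ∑ d ∈ range (K + 1), 2 ^ d * if d < K then 2 * (c d - c (d + 1)) ^ 2 else 0 := by
      simp [Fintype.sum_prod_type,
        sum_depth fun d => if d < K then 2 * (c d - c (d + 1)) ^ 2 else 0]
    _ = _ := by
      rw [sum_range_succ, if_neg (lt_irrefl K), mul_zero, add_zero, mul_sum, mul_sum]
      refine sum_congr rfl fun d hd => ?_
      rw [if_pos (mem_range.mp hd)]
      ring

theorem sum_isRootPair_levelVec (c : ℕ → ℝ) :
    ∑ p : Bool × Fin (2 ^ (K + 1) - 1), ∑ q,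
      (if IsRootPair p q then (levelVec c p - levelVec c q) ^ 2 else 0) = 8 * c 0 ^ 2 := by
  have hpos : 0 < 2 ^ (K + 1) - 1 := by
    have := Nat.one_lt_two_pow (n := K + 1) (by omega)
    omega
  have hroot : ∀ i : Fin (2 ^ (K + 1) - 1), (i : ℕ) = 0 ↔ i = ⟨0, hpos⟩ := fun i =>
    (Fin.ext_iff (a := i) (b := ⟨0, hpos⟩)).symm
  simp [IsRootPair, levelVec, Fintype.sum_prod_type, hroot, ite_and, depth]
  ring

theorem edgeEnergy_levelVec (c : ℕ → ℝ) : (TK K).edgeEnergy (levelVec c) =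
    8 * (∑ d ∈ range K, 2 ^ d * (c d - c (d + 1)) ^ 2 + c 0 ^ 2) := by
  have hswap : ∑ p : Bool × Fin (2 ^ (K + 1) - 1), ∑ q,
      (if IsChild q p then (levelVec c p - levelVec c q) ^ 2 else 0) =
      ∑ p : Bool × Fin (2 ^ (K + 1) - 1), ∑ q,
      (if IsChild p q then (levelVec c p - levelVec c q) ^ 2 else 0) := by
    rw [sum_comm]
    exact sum_congr rfl fun p _ => sum_congr rfl fun q _ => by rw [sub_sq_comm]
  simp only [SimpleGraph.edgeEnergy, ite_adj, sum_add_distrib]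
  rw [hswap, sum_isChild_levelVec, sum_isRootPair_levelVec]
  ring

end TK

theorem sum_mul_succ_eq_of_three_term_rec {w : ℕ → ℝ} {a : ℝ} {K : ℕ} (h0 : w 0 = 0)
    (hK : w K = 0) (hrec : ∀ e, w e + w (e + 2) = 2 * a * w (e + 1)) :
    ∑ d ∈ range K, w d * w (d + 1) = a * ∑ d ∈ range (K + 1), w d ^ 2 := by
  obtain _ | M := K
  · simp [h0]
  have hB₁ : ∑ d ∈ range (M + 1), w d * w (d + 1) = ∑ e ∈ range M, w (e + 1) * w (e + 2) := by
    simp [sum_range_succ', h0]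
  have hB₂ : ∑ d ∈ range (M + 1), w d * w (d + 1) = ∑ e ∈ range M, w e * w (e + 1) := by
    simp [sum_range_succ, hK]
  have hA : ∑ d ∈ range (M + 1 + 1), w d ^ 2 = ∑ e ∈ range M, w (e + 1) ^ 2 := by
    rw [sum_range_succ, hK, sum_range_succ', h0]
    simp
  have h2B : ∑ e ∈ range M, w (e + 1) * w (e + 2) + ∑ e ∈ range M, w e * w (e + 1) =
      2 * a * ∑ e ∈ range M, w (e + 1) ^ 2 := by
    rw [← sum_add_distrib, mul_sum]
    exact sum_congr rfl fun e _ => by linear_combination w (e + 1) * hrec e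
  rw [hA]
  linarith

theorem levelProfile_energy_eq_of_three_term_rec {w c : ℕ → ℝ} {a : ℝ} {K : ℕ} (hc : ∀ d, c d = w d / √2 ^ d)
    (h0 : w 0 = 0) (hK : w K = 0) (hrec : ∀ e, w e + w (e + 2) = 2 * a * w (e + 1)) :
    2 * ∑ d ∈ range K, 2 ^ d * (c d - c (d + 1)) ^ 2 + 2 * c 0 ^ 2 =
      (3 - 2 * √2 * a) * ∑ d ∈ range (K + 1), 2 ^ d * c d ^ 2 := by
  have hs : √2 ^ 2 = 2 := sq_sqrt (by norm_num)
  have hpow : ∀ d, (2 : ℝ) ^ d = (√2 ^ d) ^ 2 := fun d => by rw [← pow_mul, mul_comm, pow_mul, hs]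
  have hsq : ∀ d, 2 ^ d * c d ^ 2 = w d ^ 2 := fun d => by
    rw [hc, hpow]
    field_simp
  have hdiff : ∀ d, 2 ^ d * (c d - c (d + 1)) ^ 2 =
      w d ^ 2 + w (d + 1) ^ 2 / 2 - √2 * (w d * w (d + 1)) := fun d => by
    have hrescale : 2 ^ d * (c d - c (d + 1)) ^ 2 = (w d - w (d + 1) / √2) ^ 2 := by
      rw [hc, hc, pow_succ √2 d, hpow]
      field_simp
    rw [hrescale]
    field_simp
    linear_combination (2 * w d * w (d + 1) * √2 - w (d + 1) ^ 2) * hs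
  have hA₁ := sum_range_succ (fun d => w d ^ 2) K
  have hA₂ := sum_range_succ' (fun d => w d ^ 2) K
  simp only [hdiff, hsq, sum_sub_distrib, sum_add_distrib, ← mul_sum, ← sum_div, hc 0, h0,
    sum_mul_succ_eq_of_three_term_rec h0 hK hrec]
  simp only [hK, h0] at hA₁ hA₂
  linear_combination (-2 : ℝ) * hA₁ - hA₂

theorem algConn_le_of_TK_levelProfile {V : Type*} [Fintype V] {G : SimpleGraph V} {K : ℕ}
    (hdeg : ∀ v, G.degree v ≤ 3) {f : Bool × Fin (2 ^ (K + 1) - 1) → V} (hinj : Injective f)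
    (hhom : ∀ a b, (TK K).Adj a b → G.Adj (f a) (f b)) {c : ℕ → ℝ} (hcK : c K = 0) {d : ℕ}
    (hd : d ≤ K) (hcd : c d ≠ 0) {lam : ℝ}
    (hlam : 2 * ∑ d ∈ range K, 2 ^ d * (c d - c (d + 1)) ^ 2 + 2 * c 0 ^ 2 ≤
      lam * ∑ d ∈ range (K + 1), 2 ^ d * c d ^ 2) :
    algConn V G ≤ lam := by
  have hnbr : ∀ p, TK.levelVec c p ≠ 0 → ∀ v, G.Adj (f p) v → ∃ q, (TK K).Adj p q ∧ f q = v :=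
    fun p hp _ hv => SimpleGraph.exists_adj_eq_of_degree_le hinj hhom
      ((hdeg _).trans (TK.three_le_degree (TK.lt_of_levelVec_ne_zero hcK hp))) hv
  refine algConn_le_of_edgeEnergy_le G (extend f (TK.levelVec c) 0) ?_ ?_ ?_
  · intro h
    exact TK.levelVec_ne_zero hd hcd
      (funext fun p => by simpa [hinj.extend_apply] using congrFun h (f p))
  · simpa [TK.sum_levelVec] using hinj.sum_extend_zero id rfl (TK.levelVec c)
  · rw [SimpleGraph.edgeEnergy_extend_zero hinj hhom _ hnbr, hinj.sum_extend_zero (· ^ 2) (by simp),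
      TK.edgeEnergy_levelVec, TK.sum_levelVec_sq]
    linarith

/-- **Lemma (double binary tree bound).** If a cubic graph `G` contains `T_K` as a
subgraph (there is an injective map preserving adjacency), then
`λ₂(G) ≤ 3 - 2√2·cos(π/K)`. -/
theorem cubic_with_TK_subgraph_algConn_le (K n : ℕ) (hK : 1 ≤ K)
    (G : SimpleGraph (Fin n)) (hcubic : ∀ v, G.degree v = 3)
    (f : Bool × Fin (2 ^ (K + 1) - 1) → Fin n) (hinj : Function.Injective f)
    (hhom : ∀ a b, (TK K).Adj a b → G.Adj (f a) (f b)) :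
    algConn (Fin n) G ≤ 3 - 2 * Real.sqrt 2 * Real.cos (Real.pi / K) := by
  have hdeg : ∀ v, G.degree v ≤ 3 := fun v => (hcubic v).le
  obtain rfl | hK := hK.eq_or_lt
  · refine algConn_le_of_TK_levelProfile hdeg hinj hhom (c := fun d => if d = 0 then 1 else 0)
      rfl zero_le_one one_ne_zero ?_
    norm_num [sum_range_succ, cos_pi]
    linarith [one_lt_sqrt_two]
  · have hθ : (K : ℝ) * (π / K) = π := mul_div_cancel₀ π (by positivity)
    have hsin : sin (π / K) ≠ 0 := (sin_pos_of_pos_of_lt_pi (by positivity)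
      (div_lt_self pi_pos (by exact_mod_cast hK))).ne'
    refine algConn_le_of_TK_levelProfile hdeg hinj hhom (d := 1)
      (c := fun d => sin (d * (π / K)) / √2 ^ d) (by simp [hθ]) hK.le (by simpa using hsin)
      (levelProfile_energy_eq_of_three_term_rec (fun _ => rfl) (by simp) (by simp [hθ]) fun e => ?_).le
    push_cast
    rw [show (e + 2 : ℝ) * (π / K) = (e + 1) * (π / K) + π / K by ring,
      show (e : ℝ) * (π / K) = (e + 1) * (π / K) - π / K by ring, sin_add, sin_sub]
    ring
end

section
/- Any tree T on n ≥ 3 vertices has algebraic connectivity λ₂(T) ≤ 1, with equality if and only if T is the star K_{1,n−1}. -/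
open scoped Classical

/-- The star `K_{1,n-1}` on `Fin n`: the vertex `0` is adjacent to all other vertices. -/
def starGraph (n : ℕ) : SimpleGraph (Fin n) :=
  SimpleGraph.fromRel (fun a _ => (a : ℕ) = 0)

/-!
For `x ≠ 0` with `∑ x = 0`, `λ₂` is at most the Rayleigh quotient `xᵀLx / xᵀx` of the Laplacian.
On the star centred at `r` this quotient is `1 + n x_r² / ‖x‖²`, so `λ₂ = 1` there, attained by
vectors vanishing at the centre. A tree that is not a star has two nonadjacent leaves `v`, `w`
with distinct neighbours `c`, `u` (a vertex farthest from a given vertex is a leaf; take `v`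
farthest from anywhere, `c` its neighbour and `w` farthest from `c`). For `p = e_v - e_w` and
`d = e_c - e_u` one has `L p = p - d`, so the quotient at `p + ε d` is
`(2 - 4ε + O(ε²)) / (2 + 2ε²) < 1` for small `ε > 0`.
-/

open Matrix

lemma Matrix.IsSymm.dotProduct_mulVec_comm {n R : Type*} [Fintype n] [CommSemiring R]
    {A : Matrix n n R} (hA : A.IsSymm) (x y : n → R) :
    x ⬝ᵥ (A *ᵥ y) = (A *ᵥ x) ⬝ᵥ y := by
  rw [dotProduct_mulVec, ← mulVec_transpose, hA.eq]

lemma Matrix.IsSymm.exists_rayleigh_add_smul_lt_one {n : Type*} [Fintype n]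
    {A : Matrix n n ℝ} (hA : A.IsSymm) {p d : n → ℝ} (hAp : A *ᵥ p = p - d)
    (hpd : p ⬝ᵥ d = 0) (hd : d ≠ 0) :
    ∃ ε : ℝ, (p + ε • d) ⬝ᵥ (A *ᵥ (p + ε • d)) / ((p + ε • d) ⬝ᵥ (p + ε • d)) < 1 := by
  have hpp : 0 ≤ p ⬝ᵥ p := Finset.sum_nonneg fun i _ => mul_self_nonneg (p i)
  have hdd : 0 < d ⬝ᵥ d := (Finset.sum_nonneg fun i _ => mul_self_nonneg (d i)).lt_of_ne
    (Ne.symm (dotProduct_self_eq_zero.not.2 hd))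
  have hpAd : p ⬝ᵥ (A *ᵥ d) = -(d ⬝ᵥ d) := by
    rw [hA.dotProduct_mulVec_comm, hAp, sub_dotProduct, hpd, zero_sub]
  obtain ⟨ε, hε, hεK⟩ :=
    exists_pos_mul_lt (by positivity : 0 < 2 * (d ⬝ᵥ d)) (d ⬝ᵥ (A *ᵥ d) - d ⬝ᵥ d)
  refine ⟨ε, ?_⟩
  -- the quotient is `(‖p‖² - 2ε‖d‖² + ε² dᵀAd) / (‖p‖² + ε²‖d‖²)`
  simp only [mulVec_add, mulVec_smul, dotProduct_add, add_dotProduct, dotProduct_smul,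
    smul_dotProduct, hAp, dotProduct_sub, hpd, dotProduct_comm d p, hpAd, smul_eq_mul]
  rw [div_lt_one (by positivity)]
  nlinarith

lemma sum_sq_pos_of_ne_zero {V : Type*} [Fintype V] {x : V → ℝ} (hx : x ≠ 0) :
    0 < ∑ i, x i ^ 2 := by
  obtain ⟨i, hi⟩ := Function.ne_iff.mp hx
  exact Finset.sum_pos' (fun j _ => sq_nonneg (x j)) ⟨i, Finset.mem_univ i, sq_pos_of_ne_zero hi⟩

section Rayleigh

variable {V W : Type*} [Fintype V] [Fintype W]

noncomputable def rayleigh (G : SimpleGraph V) (x : V → ℝ) : ℝ :=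
  (∑ i, ∑ j, if G.Adj i j then (x i - x j) ^ 2 else 0) / (2 * ∑ i, x i ^ 2)

def rayleighValues (G : SimpleGraph V) : Set ℝ :=
  {r | ∃ x : V → ℝ, x ≠ 0 ∧ ∑ i, x i = 0 ∧ r = rayleigh G x}

lemma algConn_eq_sInf_rayleighValues (G : SimpleGraph V) :
    algConn V G = sInf (rayleighValues G) := rfl

lemma rayleigh_nonneg (G : SimpleGraph V) (x : V → ℝ) : 0 ≤ rayleigh G x := by
  unfold rayleigh
  positivity

lemma algConn_le_rayleigh {G : SimpleGraph V} {x : V → ℝ} (hx : x ≠ 0) (hsum : ∑ i, x i = 0) :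
    algConn V G ≤ rayleigh G x :=
  csInf_le ⟨0, by rintro _ ⟨y, -, -, rfl⟩; exact rayleigh_nonneg G y⟩ ⟨x, hx, hsum, rfl⟩

lemma rayleigh_comp_iso {G : SimpleGraph V} {H : SimpleGraph W} (e : G ≃g H) (x : W → ℝ) :
    rayleigh G (x ∘ e) = rayleigh H x := by
  unfold rayleigh
  congr 1
  · exact Fintype.sum_equiv e.toEquiv _ _ fun i => Fintype.sum_equiv e.toEquiv _ _ fun j => by
      simp [e.map_adj_iff]
  · rw [← e.toEquiv.sum_comp]
    rfl

lemma rayleighValues_subset_of_iso {G : SimpleGraph V} {H : SimpleGraph W} (e : G ≃g H) :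
    rayleighValues G ⊆ rayleighValues H := by
  rintro _ ⟨x, hx, hsum, rfl⟩
  refine ⟨x ∘ e.symm, fun h => hx ?_, ?_, (rayleigh_comp_iso e.symm x).symm⟩
  · ext v
    simpa using congrFun h (e v)
  · rw [← hsum, ← e.symm.toEquiv.sum_comp]
    simp

lemma algConn_congr {G : SimpleGraph V} {H : SimpleGraph W} (e : G ≃g H) :
    algConn V G = algConn W H := by
  rw [algConn_eq_sInf_rayleighValues, algConn_eq_sInf_rayleighValues,
    (rayleighValues_subset_of_iso e).antisymm (rayleighValues_subset_of_iso e.symm)]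

lemma rayleigh_eq_dotProduct_lapMatrix (G : SimpleGraph V) (x : V → ℝ) :
    rayleigh G x = x ⬝ᵥ (G.lapMatrix ℝ *ᵥ x) / (x ⬝ᵥ x) := by
  rw [← toLinearMap₂'_apply', SimpleGraph.lapMatrix_toLinearMap₂', rayleigh, dotProduct]
  simp only [sq, div_div, mul_comm (2 : ℝ)]

lemma lapMatrix_mulVec_single_of_neighborSet_eq {G : SimpleGraph V} {v c : V}
    (hv : G.neighborSet v = {c}) :
    G.lapMatrix ℝ *ᵥ Pi.single v 1 = Pi.single v 1 - Pi.single c 1 := by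
  have hdeg : G.degree v = 1 := by
    rw [← G.card_neighborSet_eq_degree]
    simp [hv]
  have hadj : ∀ i, G.Adj i v ↔ i = c := fun i => by
    rw [G.adj_comm, ← G.mem_neighborSet, hv, Set.mem_singleton_iff]
  have hvc : v ≠ c := fun h => G.irrefl ((hadj v).2 h)
  ext i
  by_cases hi : i = v <;>
    simp [SimpleGraph.lapMatrix, SimpleGraph.degMatrix, Pi.single_apply, hi, hdeg, hadj, hvc]

lemma algConn_lt_one_of_neighborSet_eq {G : SimpleGraph V} {v c w u : V}
    (hv : G.neighborSet v = {c}) (hw : G.neighborSet w = {u}) (hcu : c ≠ u)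
    (hvw : ¬G.Adj v w) : algConn V G < 1 := by
  have hadj_v : ∀ t, G.Adj v t ↔ t = c := fun t => Set.ext_iff.1 hv t
  have hadj_w : ∀ t, G.Adj w t ↔ t = u := fun t => Set.ext_iff.1 hw t
  have hvc : v ≠ c := G.ne_of_adj ((hadj_v c).2 rfl)
  have hwu : w ≠ u := G.ne_of_adj ((hadj_w u).2 rfl)
  have hvu : v ≠ u := by rintro rfl; exact hvw (G.adj_symm ((hadj_w v).2 rfl))
  have hwc : w ≠ c := by rintro rfl; exact hvw ((hadj_v w).2 rfl)
  have hvw' : v ≠ w := by rintro rfl; exact hcu (((hadj_v u).1 ((hadj_w u).2 rfl)).symm)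
  set p : V → ℝ := Pi.single v 1 - Pi.single w 1
  set d : V → ℝ := Pi.single c 1 - Pi.single u 1
  have hLp : G.lapMatrix ℝ *ᵥ p = p - d := by
    simp only [p, d, mulVec_sub, lapMatrix_mulVec_single_of_neighborSet_eq hv,
      lapMatrix_mulVec_single_of_neighborSet_eq hw]
    abel
  have hpd : p ⬝ᵥ d = 0 := by
    simp [p, d, hvc.symm, hvu.symm, hwc.symm, hwu.symm]
  have hd : d ≠ 0 := fun h => by simpa [d, hcu] using congrFun h c
  obtain ⟨ε, hlt⟩ := (G.isSymm_lapMatrix ℝ).exists_rayleigh_add_smul_lt_one hLp hpd hd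
  have hx : p + ε • d ≠ 0 := fun h => by simpa [p, d, hvw', hvc, hvu] using congrFun h v
  have hsum : ∑ i, (p + ε • d) i = 0 := by
    simp [p, d, Finset.sum_add_distrib, ← Finset.mul_sum]
  calc algConn V G ≤ rayleigh G (p + ε • d) := algConn_le_rayleigh hx hsum
    _ < 1 := by rwa [rayleigh_eq_dotProduct_lapMatrix]

lemma rayleigh_starGraph (r : V) {x : V → ℝ} (hx : x ≠ 0) (hsum : ∑ i, x i = 0) :
    rayleigh (SimpleGraph.starGraph r) x = 1 + Fintype.card V * x r ^ 2 / ∑ i, x i ^ 2 := by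
  have hpos := sum_sq_pos_of_ne_zero hx
  have hnum : ∑ j, (x r - x j) ^ 2 = Fintype.card V * x r ^ 2 + ∑ i, x i ^ 2 := by
    simp [sub_sq, Finset.sum_add_distrib, Finset.sum_sub_distrib, ← Finset.mul_sum, hsum]
  calc rayleigh (SimpleGraph.starGraph r) x
      = (∑ i, ∑ j, ((if i = r then (x r - x j) ^ 2 else 0) +
          (if j = r then (x r - x i) ^ 2 else 0))) / (2 * ∑ i, x i ^ 2) := by
        unfold rayleigh
        congr 1
        refine Finset.sum_congr rfl fun i _ => Finset.sum_congr rfl fun j _ => ?_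
        by_cases hi : i = r <;> by_cases hj : j = r <;> subst_vars <;>
          simp [*, Ne.symm, sub_sq_comm]
    _ = 1 + Fintype.card V * x r ^ 2 / ∑ i, x i ^ 2 := by
        simp only [Finset.sum_add_distrib, Finset.sum_ite_irrel, Finset.sum_const_zero,
          Finset.sum_ite_eq', Finset.mem_univ, if_true, hnum]
        field_simp
        ring

lemma algConn_starGraph (r : V) (hcard : 2 < Fintype.card V) :
    algConn V (SimpleGraph.starGraph r) = 1 := by
  rw [algConn_eq_sInf_rayleighValues]
  obtain ⟨a, ha, b, hb, hab⟩ : ∃ a ∈ Finset.univ.erase r, ∃ b ∈ Finset.univ.erase r, a ≠ b := by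
    refine Finset.one_lt_card.1 ?_
    rw [Finset.card_erase_of_mem (Finset.mem_univ r), Finset.card_univ]
    omega
  set x : V → ℝ := Pi.single a 1 - Pi.single b 1
  have hx : x ≠ 0 := fun h => by simpa [x, hab] using congrFun h a
  have hsum : ∑ i, x i = 0 := by simp [x]
  have hxr : x r = 0 := by
    simp [x, (Finset.ne_of_mem_erase ha).symm, (Finset.ne_of_mem_erase hb).symm]
  have hx1 : rayleigh (SimpleGraph.starGraph r) x = 1 := by
    simp [rayleigh_starGraph r hx hsum, hxr]
  refine le_antisymm (hx1 ▸ algConn_le_rayleigh hx hsum :) (le_csInf ⟨1, x, hx, hsum, hx1.symm⟩ ?_)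
  rintro _ ⟨y, hy, hysum, rfl⟩
  have := sum_sq_pos_of_ne_zero hy
  rw [rayleigh_starGraph r hy hysum, le_add_iff_nonneg_right]
  positivity

end Rayleigh

lemma starGraph_eq_starGraph_zero {n : ℕ} [NeZero n] : starGraph n = SimpleGraph.starGraph 0 := by
  ext a b
  simp only [starGraph, SimpleGraph.fromRel_adj, SimpleGraph.starGraph_adj, Fin.val_eq_zero_iff]

namespace SimpleGraph

variable {V : Type*} {G : SimpleGraph V}

theorem IsTree.eq_starGraph_of_isUniversal (hT : G.IsTree) {c : V} (hc : G.IsUniversal c) :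
    G = starGraph c := by
  ext a b
  rw [starGraph_adj]
  refine ⟨fun hab => ⟨hab.ne, ?_⟩, ?_⟩
  · by_contra! hne
    have hcb : G.Adj b c := (hc hne.2.symm).symm
    have hp : (Walk.cons hab (Walk.cons hcb Walk.nil)).IsPath := by
      simp [hab.ne, hne.1, hne.2]
    exact hne.2 (hT.isAcyclic.eq_snd_of_adj_start hp (hc hne.1.symm).symm (by simp)).symm
  · rintro ⟨hab, rfl | rfl⟩
    · exact hc hab
    · exact (hc hab.symm).symm

theorem nonempty_iso_starGraph (r r' : V) : Nonempty (starGraph r ≃g starGraph r') :=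
  ⟨⟨Equiv.swap r r', by simp [Equiv.swap_apply_eq_iff]⟩⟩

theorem IsTree.exists_neighborSet_eq_singleton_of_forall_dist_le (hT : G.IsTree) {c w : V}
    (hwc : w ≠ c) (hmax : ∀ y, G.dist c y ≤ G.dist c w) : ∃ u, G.neighborSet w = {u} := by
  obtain ⟨q, hq, -⟩ := (hT.connected c w).exists_path_of_dist
  have hq_nil : ¬q.Nil := fun h => hwc h.eq.symm
  refine ⟨q.penultimate, Set.eq_singleton_iff_unique_mem.2 ⟨(q.adj_penultimate hq_nil).symm,
    fun y (hy : G.Adj w y) => ?_⟩⟩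
  -- `y` is closer to `c` than `w`, so a shortest path to `y` followed by `w` is the path `q`
  have hdist : G.dist c w = G.dist c y + 1 := by
    have := hmax y
    have := hT.dist_eq_dist_add_one_of_adj c hy
    omega
  obtain ⟨p, -, hplen⟩ := (hT.connected c y).exists_path_of_dist
  have hpath : (p.concat hy.symm).IsPath :=
    (p.concat hy.symm).isPath_of_length_eq_dist (by simp [hplen, hdist])
  have hpq := hT.isAcyclic.subsingleton_path c w |>.elim ⟨_, hpath⟩ ⟨q, hq⟩
  simpa using congrArg (fun r : G.Path c w => r.1.penultimate) hpq

theorem IsTree.exists_leaf_pair_of_forall_not_isUniversal [Finite V] (hT : G.IsTree)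
    (h : ∀ c, ¬G.IsUniversal c) :
    ∃ v c w u, G.neighborSet v = {c} ∧ G.neighborSet w = {u} ∧ c ≠ u ∧ ¬G.Adj v w := by
  obtain ⟨a⟩ := hT.connected.nonempty
  have : Nonempty V := ⟨a⟩
  obtain ⟨v, hv⟩ := Finite.exists_max (G.dist a)
  have hva : v ≠ a := by
    rintro rfl
    refine h v fun z hz => absurd ?_ hz
    exact (hT.connected.dist_eq_zero_iff).1 (by simpa using hv z)
  obtain ⟨c, hc⟩ := hT.exists_neighborSet_eq_singleton_of_forall_dist_le hva hv
  obtain ⟨z, hcz, hnadj⟩ : ∃ z, c ≠ z ∧ ¬G.Adj c z := by simpa [IsUniversal] using h c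
  obtain ⟨w, hw⟩ := Finite.exists_max (G.dist c)
  have hz : 2 ≤ G.dist c z := by
    have h0 : G.dist c z ≠ 0 := by rwa [Ne, hT.connected.dist_eq_zero_iff]
    have h1 : G.dist c z ≠ 1 := by rwa [Ne, dist_eq_one_iff_adj]
    omega
  have hcw : 2 ≤ G.dist c w := hz.trans (hw z)
  have hwc : w ≠ c := by rintro rfl; simp at hcw
  obtain ⟨u, hu⟩ := hT.exists_neighborSet_eq_singleton_of_forall_dist_le hwc hw
  refine ⟨v, c, w, u, hc, hu, ?_, fun hvw => hwc ?_⟩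
  · rintro rfl
    have : G.Adj w c := by rw [← mem_neighborSet, hu]; rfl
    rw [dist_eq_one_iff_adj.2 this.symm] at hcw
    omega
  · rw [← Set.mem_singleton_iff, ← hc]
    exact hvw

end SimpleGraph

/-- Any tree on `n ≥ 3` vertices has `λ₂ ≤ 1`, with equality iff it is the star
`K_{1,n-1}`. -/
theorem tree_algConn_le_one (n : ℕ) (hn : 3 ≤ n) (G : SimpleGraph (Fin n))
    (hT : G.IsTree) :
    algConn (Fin n) G ≤ 1 ∧
      (algConn (Fin n) G = 1 ↔ Nonempty (G ≃g starGraph n)) := by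
  have : NeZero n := ⟨by omega⟩
  have hstar : algConn (Fin n) (starGraph n) = 1 := by
    rw [starGraph_eq_starGraph_zero, algConn_starGraph 0 (by rw [Fintype.card_fin]; omega)]
  by_cases hiso : Nonempty (G ≃g starGraph n)
  · obtain ⟨e⟩ := hiso
    have h1 := (algConn_congr e).trans hstar
    exact ⟨h1.le, iff_of_true h1 ⟨e⟩⟩
  · have hns : ∀ c, ¬G.IsUniversal c := fun c hc => hiso <| by
      rw [hT.eq_starGraph_of_isUniversal hc, starGraph_eq_starGraph_zero]
      exact SimpleGraph.nonempty_iso_starGraph c 0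
    obtain ⟨v, c, w, u, hv, hw, hcu, hvw⟩ := hT.exists_leaf_pair_of_forall_not_isUniversal hns
    have hlt := algConn_lt_one_of_neighborSet_eq hv hw hcu hvw
    exact ⟨hlt.le, iff_of_false hlt.ne hiso⟩
end

section
/- If T is a tree with diameter D, then λ₂(T) ≤ 2 − 2cos(π/(D+1)). -/
/-!
Let `u = v₀, …, v_D = w` be a diametral path of the tree and project every vertex `a` onto it,
at position `(a | w)_u`. An edge off the path does not separate `u` from `w`, so its two
ends have the same projection. Pulling back the Fiedler vector `f` of the path `P_{D+1}` along
the projection and centring it gives a test vector whose Laplacian energy is that of `f` on the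
path, while its squared norm is at least that of `f` (because `∑ f = 0`). Hence
`λ₂(T) ≤ λ₂(P_{D+1}) = 2 - 2 cos (π / (D + 1))`.
-/

open scoped Classical

open Finset Real

lemma Finset.sum_range_two_mul {M : Type*} [AddCommMonoid M] (h : ℕ → M) (m : ℕ) :
    ∑ j ∈ range (2 * m), h j = ∑ k ∈ range m, (h (2 * k) + h (2 * k + 1)) := by
  induction m with
  | zero => simp
  | succ m ih => rw [Nat.mul_succ, sum_range_succ, sum_range_succ, sum_range_succ, ih, add_assoc]

lemma sum_range_cos_sq (m : ℕ) : ∑ j ∈ range (2 * m), cos (j * π / (2 * m)) ^ 2 = m := by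
  rcases Nat.eq_zero_or_pos m with rfl | hm
  · simp
  have hshift (j : ℕ) : cos (((m + j : ℕ) : ℝ) * π / (2 * m)) = -sin (j * π / (2 * m)) := by
    rw [← cos_add_pi_div_two]
    congr 1
    field_simp
    push_cast
    ring
  rw [two_mul, sum_range_add, ← sum_add_distrib]
  simp only [hshift, neg_sq, cos_sq_add_sin_sq, sum_const, card_range, nsmul_one]

/-- The eigenvector of the Laplacian of the path on `D + 1` vertices for its second smallest
eigenvalue `2 - 2 cos (π / (D + 1))`. -/
noncomputable def pathFiedler (D k : ℕ) : ℝ := cos ((2 * k + 1) * π / (2 * (D + 1)))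

lemma sum_pathFiedler (D : ℕ) : ∑ k ∈ range (D + 1), pathFiedler D k = 0 := by
  have hreflect : ∀ k ∈ range (D + 1), pathFiedler D (D - k) = -pathFiedler D k := by
    intro k hk
    have hkD : k ≤ D := Nat.lt_succ_iff.mp (mem_range.mp hk)
    rw [pathFiedler, pathFiedler, ← cos_pi_sub, Nat.cast_sub hkD]
    congr 1
    field_simp
    ring
  have h := sum_range_reflect (pathFiedler D) (D + 1)
  rw [Nat.add_sub_cancel, sum_congr rfl hreflect, sum_neg_distrib] at h
  linarith

lemma pathFiedler_zero_pos {D : ℕ} (hD : 0 < D) : 0 < pathFiedler D 0 := by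
  unfold pathFiedler
  apply cos_pos_of_mem_Ioo
  constructor
  · have : 0 < (2 * ((0 : ℕ) : ℝ) + 1) * π / (2 * (D + 1)) := by positivity
    linarith [pi_pos]
  · rw [Nat.cast_zero, div_lt_div_iff₀ (by positivity) two_pos]
    have : (1 : ℝ) ≤ D := by exact_mod_cast hD
    nlinarith [pi_pos]

lemma pathFiedler_sub_succ (D k : ℕ) :
    pathFiedler D k - pathFiedler D (k + 1) =
      2 * sin ((k + 1) * π / (D + 1)) * sin (π / (2 * (D + 1))) := by
  have hk : pathFiedler D k = cos ((k + 1) * π / (D + 1) - π / (2 * (D + 1))) := by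
    rw [pathFiedler]
    congr 1
    field_simp
    ring
  have hk1 : pathFiedler D (k + 1) = cos ((k + 1) * π / (D + 1) + π / (2 * (D + 1))) := by
    rw [pathFiedler]
    congr 1
    field_simp
    push_cast
    ring
  rw [hk, hk1, cos_sub, cos_add]
  ring

lemma sum_sin_sq_eq_sum_pathFiedler_sq (D : ℕ) :
    ∑ k ∈ range D, sin ((k + 1) * π / (D + 1)) ^ 2 =
      ∑ k ∈ range (D + 1), pathFiedler D k ^ 2 := by
  have hsplit := sum_range_cos_sq (D + 1)
  rw [sum_range_two_mul, sum_add_distrib] at hsplit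
  have heven (k : ℕ) : cos (((2 * k : ℕ) : ℝ) * π / (2 * ((D + 1 : ℕ) : ℝ))) ^ 2
      = 1 - sin (k * π / (D + 1)) ^ 2 := by
    rw [← cos_sq']
    congr 2
    field_simp
    push_cast
    ring
  have hodd (k : ℕ) :
      cos (((2 * k + 1 : ℕ) : ℝ) * π / (2 * ((D + 1 : ℕ) : ℝ))) = pathFiedler D k := by
    rw [pathFiedler]
    push_cast
    rfl
  simp only [heven, hodd, sum_sub_distrib, sum_const, card_range, nsmul_one] at hsplit
  rw [sum_range_succ'] at hsplit
  simp only [Nat.cast_zero, zero_mul, zero_div, sin_zero] at hsplit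
  push_cast at hsplit ⊢
  linarith

lemma sum_sub_pathFiedler_sq (D : ℕ) :
    ∑ k ∈ range D, (pathFiedler D k - pathFiedler D (k + 1)) ^ 2
      = (2 - 2 * cos (π / (D + 1))) * ∑ k ∈ range (D + 1), pathFiedler D k ^ 2 := by
  have hhalf : 2 - 2 * cos (π / (D + 1)) = 4 * sin (π / (2 * (D + 1))) ^ 2 := by
    have h := cos_sq' (π / (2 * (D + 1)))
    rw [cos_sq, show 2 * (π / (2 * (D + 1))) = π / (D + 1) by field_simp] at h
    linarith
  simp only [pathFiedler_sub_succ, hhalf, ← sum_sin_sq_eq_sum_pathFiedler_sq, mul_sum]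
  exact sum_congr rfl fun k _ => by ring

namespace SimpleGraph

variable {V : Type*} {G : SimpleGraph V}

/-- The Gromov product `(a | w)_u`. In a tree it is the distance from `u` to the projection of `a`
onto the geodesic from `u` to `w`; in particular the division by `2` is exact. -/
noncomputable def gromovProduct (G : SimpleGraph V) (u a w : V) : ℕ :=
  (G.dist u a + G.dist u w - G.dist a w) / 2

lemma Walk.dist_getVert_of_length_eq_dist {u w : V} (p : G.Walk u w) (hp : p.length = G.dist u w)
    {k : ℕ} (hk : k ≤ p.length) :
    G.dist u (p.getVert k) = k ∧ G.dist (p.getVert k) w = p.length - k := by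
  have htake : G.dist u (p.getVert k) ≤ k := (dist_le (p.take k)).trans (by simp)
  have hdrop : G.dist (p.getVert k) w ≤ p.length - k := (dist_le (p.drop k)).trans (by simp)
  have htri := (p.take k).reachable.dist_triangle_left w
  omega

lemma Walk.gromovProduct_getVert {u w : V} (p : G.Walk u w) (hp : p.length = G.dist u w)
    {k : ℕ} (hk : k ≤ p.length) : G.gromovProduct u (p.getVert k) w = k := by
  obtain ⟨hu, hw⟩ := p.dist_getVert_of_length_eq_dist hp hk
  rw [gromovProduct, hu, hw, ← hp]
  omega

lemma reachable_deleteEdges_of_dist_lt {t a b : V} (hta : G.Reachable t a)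
    (hlt : G.dist t a < G.dist t b) : (G.deleteEdges {s(a, b)}).Reachable t a := by
  obtain ⟨q, -, hq⟩ := hta.exists_path_of_dist
  refine reachable_deleteEdges_iff_exists_walk.mpr ⟨q, fun he => ?_⟩
  have hb : b ∈ q.support := q.snd_mem_support_of_mem_edges he
  have := (dist_le (q.takeUntil b hb)).trans (q.length_takeUntil_le_length hb)
  omega

lemma IsTree.dist_lt_dist_iff_reachable_deleteEdges (hT : G.IsTree) {a b : V} (hab : G.Adj a b)
    (t : V) : G.dist t a < G.dist t b ↔ (G.deleteEdges {s(a, b)}).Reachable t a := by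
  refine ⟨reachable_deleteEdges_of_dist_lt (hT.connected t a), fun hta => ?_⟩
  by_contra! hle
  have hlt : G.dist t b < G.dist t a := lt_of_le_of_ne hle (hT.dist_ne_of_adj t hab).symm
  have htb := reachable_deleteEdges_of_dist_lt (hT.connected t b) hlt
  rw [Sym2.eq_swap] at htb
  exact (isAcyclic_iff_forall_adj_isBridge.mp hT.isAcyclic hab) (hta.symm.trans htb)

lemma IsTree.gromovProduct_eq_of_adj_of_notMem_edges (hT : G.IsTree) {a b u w : V}
    (hab : G.Adj a b) {p : G.Walk u w} (he : s(a, b) ∉ p.edges) :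
    G.gromovProduct u a w = G.gromovProduct u b w := by
  have huw : (G.deleteEdges {s(a, b)}).Reachable u w :=
    reachable_deleteEdges_iff_exists_walk.mpr ⟨p, he⟩
  have hside : G.dist u a < G.dist u b ↔ G.dist w a < G.dist w b := by
    simp only [hT.dist_lt_dist_iff_reachable_deleteEdges hab]
    exact ⟨huw.symm.trans, huw.trans⟩
  have hu := hT.dist_eq_dist_add_one_of_adj u hab
  have hw := hT.dist_eq_dist_add_one_of_adj w hab
  rw [gromovProduct, gromovProduct, dist_comm (u := a), dist_comm (u := b)]
  omega

structure IsPathRetraction (G : SimpleGraph V) (D : ℕ) (v : ℕ → V) (ρ : V → ℕ) :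
    Prop where
  adj : ∀ k < D, G.Adj (v k) (v (k + 1))
  apply_eq : ∀ k ≤ D, ρ (v k) = k
  edge_eq : ∀ a b, G.Adj a b → ρ a ≠ ρ b → ∃ k < D, s(a, b) = s(v k, v (k + 1))

lemma IsTree.isPathRetraction_gromovProduct (hT : G.IsTree) {u w : V} (p : G.Walk u w)
    (hp : p.length = G.dist u w) :
    G.IsPathRetraction p.length p.getVert (fun a => G.gromovProduct u a w) where
  adj _ := p.adj_getVert_succ
  apply_eq _ := p.gromovProduct_getVert hp
  edge_eq a b hab hne := by
    by_cases he : s(a, b) ∈ p.edges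
    · obtain ⟨k, hk, hkab⟩ := p.mk_mem_edges_iff_exists.mp he
      exact ⟨k, hk, hkab.symm⟩
    · exact absurd (hT.gromovProduct_eq_of_adj_of_notMem_edges hab he) hne

section Rayleigh

variable [Fintype V]

noncomputable def rayleighQuotient (G : SimpleGraph V) (x : V → ℝ) : ℝ :=
  (∑ i, ∑ j, if G.Adj i j then (x i - x j) ^ 2 else 0) / (2 * ∑ i, x i ^ 2)

lemma rayleighQuotient_nonneg (G : SimpleGraph V) (x : V → ℝ) : 0 ≤ G.rayleighQuotient x := by
  unfold rayleighQuotient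
  positivity

lemma algConn_le_rayleighQuotient {x : V → ℝ} (hx : x ≠ 0) (hsum : ∑ i, x i = 0) :
    algConn V G ≤ G.rayleighQuotient x :=
  csInf_le ⟨0, by rintro r ⟨y, -, -, rfl⟩; exact G.rayleighQuotient_nonneg y⟩
    ⟨x, hx, hsum, rfl⟩

lemma algConn_of_subsingleton (G : SimpleGraph V) [Subsingleton V] : algConn V G = 0 := by
  unfold algConn
  convert Real.sInf_empty
  refine Set.eq_empty_of_forall_notMem fun r hr => ?_
  obtain ⟨x, hx, hsum, -⟩ := hr
  exact hx (funext fun j => by rwa [Fintype.sum_subsingleton _ j] at hsum)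

variable {D : ℕ} {v : ℕ → V} {ρ : V → ℕ}

lemma IsPathRetraction.sum_adj_sq_sub_comp (hr : G.IsPathRetraction D v ρ) (g : ℕ → ℝ) :
    ∑ a, ∑ b, (if G.Adj a b then (g (ρ a) - g (ρ b)) ^ 2 else 0)
      = 2 * ∑ k ∈ range D, (g k - g (k + 1)) ^ 2 := by
  set e : ℕ × Bool → V × V :=
    fun q => if q.2 then (v q.1, v (q.1 + 1)) else (v (q.1 + 1), v q.1)
  have hρe : ∀ q ∈ range D ×ˢ (univ : Finset Bool),
      (ρ (e q).1, ρ (e q).2) = if q.2 then (q.1, q.1 + 1) else (q.1 + 1, q.1) := by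
    rintro ⟨k, _ | _⟩ hk <;> simp only [mem_product, mem_range] at hk <;>
      simp [e, hr.apply_eq k (by omega), hr.apply_eq (k + 1) (by omega)]
  have hdouble : 2 * ∑ k ∈ range D, (g k - g (k + 1)) ^ 2
      = ∑ q ∈ range D ×ˢ (univ : Finset Bool), (g q.1 - g (q.1 + 1)) ^ 2 := by
    rw [sum_product, mul_sum]
    simp [two_mul]
  rw [hdouble, ← sum_product']
  symm
  refine sum_of_injOn e ?_ (fun _ _ => mem_coe.mpr (mem_product.mpr ⟨mem_univ _, mem_univ _⟩))
    ?_ ?_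
  · intro q hq q' hq' hqq'
    have h := hρe q' hq'
    rw [← hqq', hρe q hq] at h
    obtain ⟨k, _ | _⟩ := q <;> obtain ⟨l, _ | _⟩ := q' <;> simp at h <;> simp [h] <;> omega
  · rintro ⟨a, b⟩ - hq
    by_contra hne
    have hab : G.Adj a b := by by_contra h; simp [h] at hne
    have hρab : ρ a ≠ ρ b := by intro h; simp [h] at hne
    obtain ⟨k, hk, hkab⟩ := hr.edge_eq a b hab hρab
    rcases Sym2.eq_iff.mp hkab with ⟨rfl, rfl⟩ | ⟨rfl, rfl⟩
    · exact hq ⟨(k, true), by simp [hk], rfl⟩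
    · exact hq ⟨(k, false), by simp [hk], rfl⟩
  · rintro ⟨k, b⟩ hq
    have hk : k < D := by simpa using hq
    cases b <;> simp [e, hr.adj k hk, (hr.adj k hk).symm, hr.apply_eq k hk.le,
      hr.apply_eq (k + 1) hk, sub_sq_comm]

lemma sum_sq_le_sum_comp_sub_sq (hρ : ∀ k ≤ D, ρ (v k) = k) {g : ℕ → ℝ}
    (hg : ∑ k ∈ range (D + 1), g k = 0) (c : ℝ) :
    ∑ k ∈ range (D + 1), g k ^ 2 ≤ ∑ a, (g (ρ a) - c) ^ 2 := by
  have hρ' : ∀ k ∈ range (D + 1), ρ (v k) = k :=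
    fun k hk => hρ k (Nat.lt_succ_iff.mp (mem_range.mp hk))
  have hinj : ∀ k ∈ range (D + 1), ∀ l ∈ range (D + 1), v k = v l → k = l :=
    fun k hk l hl hkl => by rw [← hρ' k hk, hkl, hρ' l hl]
  calc ∑ k ∈ range (D + 1), g k ^ 2
      ≤ ∑ k ∈ range (D + 1), g k ^ 2 + (D + 1) * c ^ 2 := by nlinarith [sq_nonneg c]
    _ = ∑ k ∈ range (D + 1), (g k - c) ^ 2 := by
      simp only [sub_sq, sum_add_distrib, sum_sub_distrib, ← sum_mul, ← mul_sum, hg, sum_const,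
        card_range, nsmul_eq_mul]
      push_cast
      ring
    _ = ∑ a ∈ (range (D + 1)).image v, (g (ρ a) - c) ^ 2 := by
      rw [sum_image hinj]
      exact sum_congr rfl fun k hk => by rw [hρ' k hk]
    _ ≤ ∑ a, (g (ρ a) - c) ^ 2 := sum_le_univ_sum_of_nonneg fun a => sq_nonneg _

theorem IsPathRetraction.algConn_le (hr : G.IsPathRetraction D v ρ) {g : ℕ → ℝ}
    (hg : ∑ k ∈ range (D + 1), g k = 0) (hpos : 0 < ∑ k ∈ range (D + 1), g k ^ 2) :
    algConn V G ≤
      (∑ k ∈ range D, (g k - g (k + 1)) ^ 2) / ∑ k ∈ range (D + 1), g k ^ 2 := by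
  have hV : (Fintype.card V : ℝ) ≠ 0 := by
    have : Nonempty V := ⟨v 0⟩
    exact_mod_cast Fintype.card_ne_zero
  set x : V → ℝ := fun a => g (ρ a) - (∑ b, g (ρ b)) / Fintype.card V
  have hden : ∑ k ∈ range (D + 1), g k ^ 2 ≤ ∑ a, x a ^ 2 :=
    sum_sq_le_sum_comp_sub_sq hr.apply_eq hg _
  have hx : x ≠ 0 := fun h => by simp [h] at hden; linarith
  have hsum : ∑ a, x a = 0 := by
    simp only [x, sum_sub_distrib, sum_const, card_univ, nsmul_eq_mul]
    field_simp
    ring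
  calc algConn V G ≤ G.rayleighQuotient x := algConn_le_rayleighQuotient hx hsum
    _ = (∑ k ∈ range D, (g k - g (k + 1)) ^ 2) / ∑ a, x a ^ 2 := by
      simp only [rayleighQuotient, x, sub_sub_sub_cancel_right, hr.sum_adj_sq_sub_comp]
      exact mul_div_mul_left _ _ two_ne_zero
    _ ≤ _ := div_le_div_of_nonneg_left (sum_nonneg fun k _ => sq_nonneg _) hpos hden

end Rayleigh

theorem IsTree.algConn_le_of_dist_eq [Fintype V] (hT : G.IsTree) {u w : V} {D : ℕ} (hD : 0 < D)
    (huw : G.dist u w = D) : algConn V G ≤ 2 - 2 * cos (π / (D + 1)) := by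
  obtain ⟨p, -, hp⟩ := hT.connected.exists_path_of_dist u w
  have hpos : 0 < ∑ k ∈ range (D + 1), pathFiedler D k ^ 2 :=
    sum_pos' (fun k _ => sq_nonneg _) ⟨0, by simp, pow_pos (pathFiedler_zero_pos hD) 2⟩
  have hr := hT.isPathRetraction_gromovProduct p hp
  rw [hp, huw] at hr
  have h := hr.algConn_le (sum_pathFiedler D) hpos
  rwa [sum_sub_pathFiedler_sq, mul_div_assoc, div_self hpos.ne', mul_one] at h

end SimpleGraph

/-- If `T` is a tree with diameter `D`, then `λ₂(T) ≤ 2 - 2cos(π/(D+1))`. -/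
theorem tree_algConn_le_diam_bound (n D : ℕ) (G : SimpleGraph (Fin n))
    (hT : G.IsTree) (hD : G.diam = D) :
    algConn (Fin n) G ≤ 2 - 2 * Real.cos (Real.pi / (D + 1)) := by
  have : Nonempty (Fin n) := hT.connected.nonempty
  rcases Nat.eq_zero_or_pos D with rfl | hD0
  · have : Subsingleton (Fin n) :=
      (SimpleGraph.diam_eq_zero.mp hD).resolve_left
        (SimpleGraph.connected_iff_ediam_ne_top.mp hT.connected)
    rw [G.algConn_of_subsingleton]
    linarith [cos_le_one (π / ((0 : ℕ) + 1))]
  · obtain ⟨u, w, huw⟩ := G.exists_dist_eq_diam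
    exact hT.algConn_le_of_dist_eq hD0 (huw.trans hD)
end

section
/- For the eigenvalue problem μv₁ = 2v₁ + 2(v₁ − v₂), μv_j = v_j − v_{j−1} + 2(v_j − v_{j+1}) for 2 ≤ j ≤ K−1, and μv_K = v_K − v_{K−1} + 4v_K, the smallest eigenvalue μ satisfies μ = 3 − 2√2·cos(π/K). -/
/-
After the diagonal similarity `D = diag (√2 ^ j)` the matrix `M` of the problem becomes a
symmetric matrix `S` with off-diagonal entries `0` or `-√2`. With `θ = π / K`, the vector
`u j = √2 sin (j θ) + sin ((j - 1) θ)` is a positive eigenvector of `S` for `3 - 2√2 cos θ`.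
For a symmetric matrix with nonpositive off-diagonal entries, a positive eigenvector `u` belongs
to the least eigenvalue, because of the ground-state identity
`2 (μ₀ ‖w‖² - wᵀ S w) = ∑ i j, S i j u i u j (w i / u i - w j / u j) ^ 2 ≤ 0`.
-/

open Finset Matrix Real

section PositiveEigenvector

variable {ι : Type*} [Fintype ι] {A : Matrix ι ι ℝ} {u : ι → ℝ} {μ₀ : ℝ}

theorem Matrix.mul_dotProduct_self_le_dotProduct_mulVec (hA : A.IsSymm)
    (hoff : ∀ i j, i ≠ j → A i j ≤ 0) (hu : ∀ i, 0 < u i) (hAu : A *ᵥ u = μ₀ • u) (w : ι → ℝ) :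
    μ₀ * (w ⬝ᵥ w) ≤ w ⬝ᵥ (A *ᵥ w) := by
  have row (i : ι) : ∑ j, A i j * u j = μ₀ * u i := by
    simpa [mulVec, dotProduct] using congrFun hAu i
  have term (i j : ι) : A i j * u i * u j * (w i / u i - w j / u j) ^ 2 =
      w i ^ 2 / u i * (A i j * u j) + w j ^ 2 / u j * (A j i * u i)
        - 2 * (w i * (A i j * w j)) := by
    rw [hA.apply]
    field_simp [(hu i).ne', (hu j).ne']
    ring
  have picone : ∑ i, ∑ j, A i j * u i * u j * (w i / u i - w j / u j) ^ 2 =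
      2 * (μ₀ * (w ⬝ᵥ w) - w ⬝ᵥ (A *ᵥ w)) := by
    simp only [term, sum_sub_distrib, sum_add_distrib, ← mul_sum]
    rw [sum_comm (f := fun i j => w j ^ 2 / u j * (A j i * u i))]
    simp only [← mul_sum, row, dotProduct, mulVec]
    have diag (i : ι) : w i ^ 2 / u i * (μ₀ * u i) = μ₀ * (w i * w i) := by
      field_simp [(hu i).ne']
    simp only [diag, ← mul_sum]
    ring
  have hnonpos : ∑ i, ∑ j, A i j * u i * u j * (w i / u i - w j / u j) ^ 2 ≤ 0 := by
    refine sum_nonpos fun i _ => sum_nonpos fun j _ => ?_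
    rcases eq_or_ne i j with rfl | hij
    · simp
    · have hAuu : A i j * u i * u j ≤ 0 :=
        mul_nonpos_of_nonpos_of_nonneg
          (mul_nonpos_of_nonpos_of_nonneg (hoff i j hij) (hu i).le) (hu j).le
      exact mul_nonpos_of_nonpos_of_nonneg hAuu (sq_nonneg _)
  linarith

theorem Matrix.le_of_pos_eigenvector_of_mulVec_eq_smul (hA : A.IsSymm)
    (hoff : ∀ i j, i ≠ j → A i j ≤ 0) (hu : ∀ i, 0 < u i) (hAu : A *ᵥ u = μ₀ • u)
    {w : ι → ℝ} (hw : w ≠ 0) {μ : ℝ} (hAw : A *ᵥ w = μ • w) : μ₀ ≤ μ := by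
  have h := mul_dotProduct_self_le_dotProduct_mulVec hA hoff hu hAu w
  rw [hAw, dotProduct_smul, smul_eq_mul] at h
  have hpos : 0 < w ⬝ᵥ w :=
    lt_of_le_of_ne (sum_nonneg fun i _ => mul_self_nonneg (w i))
      (Ne.symm (dotProduct_self_eq_zero.not.2 hw))
  exact le_of_mul_le_mul_right h hpos

end PositiveEigenvector

def diagCoeff (K j : ℕ) : ℝ := if j = 1 then 4 else if j = K then 5 else 3

/-- `(M v) i`, for the matrix `M` of the eigenvalue problem. -/
def problemMulVec (K : ℕ) (v : ℕ → ℝ) (i : ℕ) : ℝ :=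
  diagCoeff K i * v i - (if i + 1 ≤ K then 2 * v (i + 1) else 0)
    - (if 2 ≤ i then v (i - 1) else 0)

def EigenEquations (K : ℕ) (μ : ℝ) (v : ℕ → ℝ) : Prop :=
  μ * v 1 = 2 * v 1 + 2 * (v 1 - v 2) ∧
    (∀ j, 2 ≤ j → j ≤ K - 1 → μ * v j = v j - v (j - 1) + 2 * (v j - v (j + 1))) ∧
    μ * v K = v K - v (K - 1) + 4 * v K

theorem eigenEquations_iff_forall {K : ℕ} (hK : 2 ≤ K) {μ : ℝ} {v : ℕ → ℝ} :
    EigenEquations K μ v ↔ ∀ i ∈ Icc 1 K, μ * v i = problemMulVec K v i := by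
  have row_one : problemMulVec K v 1 = 2 * v 1 + 2 * (v 1 - v 2) := by
    rw [problemMulVec, diagCoeff, if_pos rfl, if_pos (show 1 + 1 ≤ K by omega),
      if_neg (show ¬2 ≤ 1 by omega)]
    ring
  have row_last : problemMulVec K v K = v K - v (K - 1) + 4 * v K := by
    rw [problemMulVec, diagCoeff, if_neg (show K ≠ 1 by omega), if_pos rfl,
      if_neg (show ¬K + 1 ≤ K by omega), if_pos hK]
    ring
  have row_mid (j : ℕ) (h2 : 2 ≤ j) (hK1 : j ≤ K - 1) :
      problemMulVec K v j = v j - v (j - 1) + 2 * (v j - v (j + 1)) := by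
    rw [problemMulVec, diagCoeff, if_neg (show j ≠ 1 by omega), if_neg (show j ≠ K by omega),
      if_pos (show j + 1 ≤ K by omega), if_pos h2]
    ring
  constructor
  · rintro ⟨h1, hj, hK'⟩ i hi
    rw [mem_Icc] at hi
    obtain rfl | rfl | ⟨h2, hK1⟩ : i = 1 ∨ i = K ∨ (2 ≤ i ∧ i ≤ K - 1) := by omega
    exacts [row_one ▸ h1, row_last ▸ hK', row_mid i h2 hK1 ▸ hj i h2 hK1]
  · intro h
    exact ⟨row_one ▸ h 1 (by rw [mem_Icc]; omega),
      fun j h2 hK1 => row_mid j h2 hK1 ▸ h j (by rw [mem_Icc]; omega),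
      row_last ▸ h K (by rw [mem_Icc]; omega)⟩

/-- `D M D⁻¹` for `D = diag (√2 ^ j)`, with rows and columns indexed by `1, …, K`. -/
noncomputable def symmetrizedMatrix (K : ℕ) : Matrix (Icc 1 K) (Icc 1 K) ℝ :=
  Matrix.of fun i j => (if (j : ℕ) = i then diagCoeff K i else 0)
    - (if (j : ℕ) = i + 1 then √2 else 0) - (if (j : ℕ) + 1 = i then √2 else 0)

theorem symmetrizedMatrix_isSymm (K : ℕ) : (symmetrizedMatrix K).IsSymm := by
  ext ⟨i, _⟩ ⟨j, _⟩
  simp only [transpose_apply, symmetrizedMatrix, of_apply]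
  split_ifs <;> first | omega | (subst_vars; ring)

theorem symmetrizedMatrix_apply_nonpos (K : ℕ) {i j : Icc 1 K} (hij : i ≠ j) :
    symmetrizedMatrix K i j ≤ 0 := by
  have : (j : ℕ) ≠ i := fun h => hij (Subtype.ext h.symm)
  simp only [symmetrizedMatrix, of_apply, this, if_false]
  split_ifs <;> simp

theorem symmetrizedMatrix_mulVec_apply (K : ℕ) (W : ℕ → ℝ) (i : Icc 1 K) :
    (symmetrizedMatrix K *ᵥ fun j => W j) i = diagCoeff K i * W i
      - (if (i : ℕ) + 1 ≤ K then √2 * W (i + 1) else 0)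
      - (if 2 ≤ (i : ℕ) then √2 * W (i - 1) else 0) := by
  obtain ⟨i, hi⟩ := i
  have hpred (j : ℕ) : j + 1 = i ↔ j = i - 1 := by rw [mem_Icc] at hi; omega
  have hsum (c : ℕ) (a : ℝ) :
      ∑ x : Icc 1 K, (if (x : ℕ) = c then a else 0) * W x =
        if c ∈ Icc 1 K then a * W c else 0 := by
    simp only [ite_mul, zero_mul]
    rw [sum_coe_sort (Icc 1 K) fun x => if x = c then a * W x else 0, sum_ite_eq']
  simp only [mulVec, dotProduct, symmetrizedMatrix, of_apply, sub_mul, sum_sub_distrib, hpred,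
    hsum, mem_Icc]
  rw [mem_Icc] at hi
  have hsucc : 1 ≤ i + 1 ∧ i + 1 ≤ K ↔ i + 1 ≤ K := by omega
  have hpred' : 1 ≤ i - 1 ∧ i - 1 ≤ K ↔ 2 ≤ i := by omega
  simp only [hi, hsucc, hpred', and_self, if_true]

theorem symmetrizedMatrix_mulVec_sqrt_two_pow_mul (K : ℕ) (v : ℕ → ℝ) (i : Icc 1 K) :
    (symmetrizedMatrix K *ᵥ fun j => √2 ^ (j : ℕ) * v j) i =
      √2 ^ (i : ℕ) * problemMulVec K v i := by
  obtain ⟨i, hi⟩ := i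
  obtain ⟨k, rfl⟩ : ∃ k, i = k + 1 := ⟨i - 1, by rw [mem_Icc] at hi; omega⟩
  have h2 : √2 * √2 = 2 := mul_self_sqrt zero_le_two
  rw [symmetrizedMatrix_mulVec_apply K fun j => √2 ^ j * v j, problemMulVec, Nat.add_sub_cancel]
  dsimp only
  split_ifs
  all_goals first | ring1 | linear_combination -(√2 ^ (k + 1) * v (k + 1 + 1)) * h2

theorem eigenEquations_iff_mulVec {K : ℕ} (hK : 2 ≤ K) {μ : ℝ} {v : ℕ → ℝ} :
    EigenEquations K μ v ↔
      symmetrizedMatrix K *ᵥ (fun j => √2 ^ (j : ℕ) * v j) =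
        μ • fun j : Icc 1 K => √2 ^ (j : ℕ) * v j := by
  rw [eigenEquations_iff_forall hK, funext_iff, Subtype.forall]
  refine forall₂_congr fun i _ => ?_
  rw [symmetrizedMatrix_mulVec_sqrt_two_pow_mul, Pi.smul_apply, smul_eq_mul, mul_left_comm]
  dsimp only
  rw [mul_right_inj' (show √2 ^ i ≠ 0 by positivity)]
  exact eq_comm

/-- Solves the interior recurrence `u (j + 1) + u (j - 1) = 2 cos θ u j` for every `θ`; the first
row of `symmetrizedMatrix` holds since `u 1 = -√2 u 0`, the last one for `θ = π / K` since then
`u (K + 1) = -√2 u K`. -/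
noncomputable def groundState (θ : ℝ) (j : ℕ) : ℝ := √2 * sin (j * θ) + sin ((j - 1) * θ)

theorem groundState_add_two (θ : ℝ) (j : ℕ) :
    groundState θ (j + 2) + groundState θ j = 2 * cos θ * groundState θ (j + 1) := by
  have h (x : ℝ) : sin (x + θ) + sin (x - θ) = 2 * cos θ * sin x := by
    rw [sin_add, sin_sub]; ring
  simp only [groundState, Nat.cast_add, Nat.cast_ofNat, Nat.cast_one]
  have h1 := h ((j + 1) * θ)
  have h2 := h (j * θ)
  ring_nf at h1 h2 ⊢
  linear_combination √2 * h1 + h2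

theorem groundState_pos {K j : ℕ} (hK : 2 ≤ K) (hj : 1 ≤ j) (hjK : j ≤ K) :
    0 < groundState (π / K) j := by
  have hKθ : (K : ℝ) * (π / K) = π := by field_simp
  have hsin {x : ℕ} (h0 : 0 < x) (hx : x < K) : 0 < sin (x * (π / K)) := by
    apply sin_pos_of_pos_of_lt_pi (by positivity)
    calc (x : ℝ) * (π / K) < K * (π / K) := by gcongr
      _ = π := hKθ
  have hsin' {x : ℕ} (hx : x ≤ K) : 0 ≤ sin (x * (π / K)) := by
    apply sin_nonneg_of_nonneg_of_le_pi (by positivity)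
    calc (x : ℝ) * (π / K) ≤ K * (π / K) := by gcongr
      _ = π := hKθ
  have hpred : ((j : ℝ) - 1) = ((j - 1 : ℕ) : ℝ) := by rw [Nat.cast_sub hj, Nat.cast_one]
  rw [groundState, hpred]
  rcases lt_or_eq_of_le hjK with hjK | rfl
  · have := hsin' (x := j - 1) (by omega)
    have := hsin (x := j) (by omega) hjK
    positivity
  · have := hsin' (x := j) le_rfl
    have := hsin (x := j - 1) (by omega) (by omega)
    positivity

theorem symmetrizedMatrix_mulVec_groundState {K : ℕ} (hK : 2 ≤ K) :
    symmetrizedMatrix K *ᵥ (fun j => groundState (π / K) j) =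
      (3 - 2 * √2 * cos (π / K)) • fun j : Icc 1 K => groundState (π / K) j := by
  have hKθ : (K : ℝ) * (π / K) = π := by field_simp
  set θ := π / K
  have hs : √2 * √2 = 2 := mul_self_sqrt zero_le_two
  have hrec := groundState_add_two θ
  funext ⟨i, hi⟩
  rw [symmetrizedMatrix_mulVec_apply K (groundState θ), Pi.smul_apply, smul_eq_mul]
  dsimp only
  rw [mem_Icc] at hi
  obtain ⟨k, rfl⟩ : ∃ k, i = k + 1 := ⟨i - 1, by omega⟩
  rw [Nat.add_sub_cancel]
  rcases Nat.eq_zero_or_pos k with rfl | hk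
  · have h0 : groundState θ 0 = -sin θ := by simp [groundState]
    have h1 : groundState θ 1 = √2 * sin θ := by simp [groundState]
    rw [diagCoeff]
    split_ifs <;> first | omega | linear_combination -√2 * hrec 0 + h1 + √2 * h0
  rcases eq_or_lt_of_le hi.2 with hkK | hkK
  · subst hkK
    push_cast at hKθ
    have hlast : groundState θ (k + 1) = sin θ := by
      rw [groundState, show ((k + 1 : ℕ) - 1 : ℝ) * θ = π - θ by push_cast; linarith]
      push_cast
      rw [hKθ, sin_pi, sin_pi_sub]
      ring
    have hghost : groundState θ (k + 2) = -(√2 * sin θ) := by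
      rw [groundState, show ((k + 2 : ℕ) : ℝ) * θ = θ + π by push_cast; linarith,
        show ((k + 2 : ℕ) - 1 : ℝ) * θ = π by push_cast; linarith, sin_pi, sin_add_pi]
      ring
    rw [diagCoeff]
    split_ifs <;>
      first
      | omega
      | linear_combination -√2 * hrec k + 2 * hlast + √2 * hghost - sin θ * hs
  · rw [diagCoeff]
    split_ifs <;> first | omega | linear_combination -√2 * hrec k

/-- **Smallest eigenvalue of the tridiagonal system.** For the eigenvalue problem
`μv₁ = 2v₁ + 2(v₁ - v₂)`, `μv_j = v_j - v_{j-1} + 2(v_j - v_{j+1})` for `2 ≤ j ≤ K-1`,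
`μv_K = v_K - v_{K-1} + 4v_K`, the smallest eigenvalue is `μ = 3 - 2√2·cos(π/K)`. -/
theorem smallest_eigenvalue_tridiagonal (K : ℕ) (hK : 2 ≤ K) :
    IsLeast {μ : ℝ | ∃ v : ℕ → ℝ,
        (∃ j, 1 ≤ j ∧ j ≤ K ∧ v j ≠ 0) ∧
        μ * v 1 = 2 * v 1 + 2 * (v 1 - v 2) ∧
        (∀ j, 2 ≤ j → j ≤ K - 1 →
          μ * v j = v j - v (j - 1) + 2 * (v j - v (j + 1))) ∧
        μ * v K = v K - v (K - 1) + 4 * v K}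
      (3 - 2 * Real.sqrt 2 * Real.cos (Real.pi / K)) := by
  have hU := symmetrizedMatrix_mulVec_groundState hK
  have hU_pos (i : Icc 1 K) : 0 < groundState (π / K) i :=
    groundState_pos hK (mem_Icc.1 i.2).1 (mem_Icc.1 i.2).2
  set v₀ : ℕ → ℝ := fun j => groundState (π / K) j / √2 ^ j
  have hv₀ : EigenEquations K (3 - 2 * √2 * cos (π / K)) v₀ := by
    have hscale : (fun j : Icc 1 K => √2 ^ (j : ℕ) * v₀ j) =
        fun j : Icc 1 K => groundState (π / K) j := by
      funext j
      simp only [v₀]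
      field_simp
    rw [eigenEquations_iff_mulVec hK, hscale]
    exact hU
  refine ⟨⟨v₀, ⟨1, le_rfl, hK.trans' one_le_two, ?_⟩, hv₀⟩, ?_⟩
  · exact div_ne_zero (hU_pos ⟨1, mem_Icc.2 ⟨le_rfl, by omega⟩⟩).ne' (by positivity)
  · rintro μ ⟨v, ⟨j, hj1, hjK, hvj⟩, hv⟩
    refine Matrix.le_of_pos_eigenvector_of_mulVec_eq_smul (symmetrizedMatrix_isSymm K)
      (fun _ _ => symmetrizedMatrix_apply_nonpos K) hU_pos hU ?_
      ((eigenEquations_iff_mulVec hK).1 hv)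
    intro h
    have hj := congrFun h ⟨j, mem_Icc.2 ⟨hj1, hjK⟩⟩
    exact hvj ((mul_eq_zero.1 hj).resolve_left (by positivity))
end
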